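/- arXiv:math/0703318 — 4 statements merged into one kernel-verified Lean document; each statement's English description precedes it below -/
import Mathlib

section
/- For every f ∈ C_0^∞(ℝ^n) and every t > 0, the oscillation inequality f**(t) − f*(t) ≤ γ_n^{-1/n} t^{1/n} |∇f|**(t) holds, where g**(t) = (1/t)∫_0^t g*(s) ds. -/
open MeasureTheory Filter Topology Set
open scoped ENNReal

noncomputable section

/-- Euclidean space `ℝ^n`. -/
abbrev En (n : ℕ) := EuclideanSpace ℝ (Fin n)

/-- Non-increasing rearrangement `f*` of `f` with respect to Lebesgue measure. -/
def rearr {n : ℕ} (f : En n → ℝ) (t : ℝ) : ℝ :=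
  sInf {l : ℝ | 0 ≤ l ∧ volume {x | l < |f x|} ≤ ENNReal.ofReal t}

/-- Maximal average `f**(t) = (1/t)∫₀ᵗ f*(s) ds`. -/
def dstar {n : ℕ} (f : En n → ℝ) (t : ℝ) : ℝ :=
  (1 / t) * ∫ s in (0:ℝ)..t, rearr f s

/-- `γ_n`, the Lebesgue measure of the unit ball of `ℝ^n`. -/
def ballVol (n : ℕ) : ℝ := (volume (Metric.ball (0 : En n) 1)).toReal

/-- The length `|∇f(x)|` of the gradient of `f`. -/
def gradNorm {n : ℕ} (f : En n → ℝ) (x : En n) : ℝ := ‖fderiv ℝ f x‖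

/-- `f ∈ C₀^∞(ℝ^n)`: smooth and compactly supported. -/
def SmoothC {n : ℕ} (f : En n → ℝ) : Prop := ContDiff ℝ (⊤ : ℕ∞) f ∧ HasCompactSupport f

namespace Osc

variable {n : ℕ}

/-- the defining set -/
def S (g : En n → ℝ) (t : ℝ) : Set ℝ :=
  {l : ℝ | 0 ≤ l ∧ volume {x | l < |g x|} ≤ ENNReal.ofReal t}

lemma rearr_eq (g : En n → ℝ) (t : ℝ) : rearr g t = sInf (S g t) := rfl

lemma bddBelow_S (g : En n → ℝ) (t : ℝ) : BddBelow (S g t) := ⟨0, fun _ h => h.1⟩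

lemma exists_bound (g : En n → ℝ) (hg : Continuous g) (h2g : HasCompactSupport g) :
    ∃ M, 0 ≤ M ∧ ∀ x, |g x| ≤ M := by
  obtain ⟨x₀, hx₀⟩ := (hg.abs).exists_forall_ge_of_hasCompactSupport (h2g.abs)
  exact ⟨|g x₀|, abs_nonneg _, hx₀⟩

lemma mem_S_of_bound {g : En n → ℝ} {M : ℝ} (hM0 : 0 ≤ M) (hM : ∀ x, |g x| ≤ M) (t : ℝ) :
    M ∈ S g t := by
  refine ⟨hM0, ?_⟩
  have : {x : En n | M < |g x|} = ∅ := by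
    ext x; simp only [mem_setOf_eq, mem_empty_iff_false, iff_false, not_lt]; exact hM x
  simp [this]

lemma S_nonempty (g : En n → ℝ) (hg : Continuous g) (h2g : HasCompactSupport g) (t : ℝ) :
    (S g t).Nonempty := by
  obtain ⟨M, hM0, hM⟩ := exists_bound g hg h2g
  exact ⟨M, mem_S_of_bound hM0 hM t⟩

lemma rearr_nonneg (g : En n → ℝ) (hg : Continuous g) (h2g : HasCompactSupport g) (t : ℝ) :
    0 ≤ rearr g t :=
  le_csInf (S_nonempty g hg h2g t) fun _ h => h.1

lemma rearr_le_of_bound {g : En n → ℝ} {M : ℝ} (hM0 : 0 ≤ M) (hM : ∀ x, |g x| ≤ M) (t : ℝ) :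
    rearr g t ≤ M :=
  csInf_le (bddBelow_S g t) (mem_S_of_bound hM0 hM t)

lemma rearr_antitone (g : En n → ℝ) (hg : Continuous g) (h2g : HasCompactSupport g) :
    Antitone (rearr g) := by
  intro s t hst
  rw [rearr_eq, rearr_eq]
  apply csInf_le_csInf (bddBelow_S g t) (S_nonempty g hg h2g s)
  intro l hl
  exact ⟨hl.1, hl.2.trans (ENNReal.ofReal_le_ofReal hst)⟩

/-- the infimum is "attained": the distribution at `rearr g t` is at most `t`. -/
lemma dist_rearr_le (g : En n → ℝ) (hg : Continuous g) (h2g : HasCompactSupport g) (t : ℝ) :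
    volume {x : En n | rearr g t < |g x|} ≤ ENNReal.ofReal t := by
  set r := rearr g t with hr
  have key : ∀ k : ℕ, volume {x : En n | r + 1/(k+1) < |g x|} ≤ ENNReal.ofReal t := by
    intro k
    have hpos : (0:ℝ) < 1/(k+1) := by positivity
    have : sInf (S g t) < r + 1/(k+1) := by rw [← rearr_eq, ← hr]; linarith
    obtain ⟨l, hl, hlt⟩ := exists_lt_of_csInf_lt (S_nonempty g hg h2g t) this
    refine le_trans (measure_mono ?_) hl.2
    intro x hx
    exact lt_trans hlt hx
  have hU : {x : En n | r < |g x|} = ⋃ k : ℕ, {x : En n | r + 1/(k+1) < |g x|} := by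
    ext x
    simp only [mem_setOf_eq, mem_iUnion]
    constructor
    · intro hx
      obtain ⟨k, hk⟩ := exists_nat_one_div_lt (sub_pos.mpr hx)
      exact ⟨k, by linarith [hk]⟩
    · rintro ⟨k, hk⟩
      have : (0:ℝ) < 1/(k+1) := by positivity
      linarith
  rw [hU]
  have hmono : Monotone (fun k : ℕ => {x : En n | r + 1/(k+1) < |g x|}) := by
    intro j k hjk x hx
    simp only [mem_setOf_eq] at *
    have hc : (j:ℝ) ≤ (k:ℝ) := Nat.cast_le.mpr hjk
    have : (1:ℝ)/(k+1) ≤ 1/(j+1) := by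
      apply one_div_le_one_div_of_le (by positivity)
      linarith
    linarith
  rw [(hmono.directed_le).measure_iUnion]
  exact iSup_le key

end Osc

section
open MeasureTheory Filter Topology Set Osc
open scoped ENNReal

variable {n : ℕ}

/-- the distribution function -/
def D (g : En n → ℝ) (l : ℝ) : ℝ≥0∞ := volume {x : En n | l < |g x|}

lemma D_antitone (g : En n → ℝ) : Antitone (D g) := by
  intro l l' h
  apply measure_mono
  intro x hx
  exact lt_of_le_of_lt h hx

/-- (5): representation of the rearrangement as a one-dimensional measure. -/
lemma ofReal_rearr_eq (g : En n → ℝ) (hg : Continuous g) (h2g : HasCompactSupport g) (s : ℝ) :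
    ENNReal.ofReal (rearr g s) = volume {l : ℝ | 0 < l ∧ ENNReal.ofReal s < D g l} := by
  set r := rearr g s with hr
  have hr0 : 0 ≤ r := rearr_nonneg g hg h2g s
  have hsub1 : Ioo 0 r ⊆ {l : ℝ | 0 < l ∧ ENNReal.ofReal s < D g l} := by
    rintro l ⟨hl0, hlr⟩
    refine ⟨hl0, ?_⟩
    by_contra hcon
    push_neg at hcon
    have : l ∈ S g s := ⟨hl0.le, hcon⟩
    have := csInf_le (bddBelow_S g s) this
    rw [← rearr_eq, ← hr] at this
    linarith
  have hsub2 : {l : ℝ | 0 < l ∧ ENNReal.ofReal s < D g l} ⊆ Ioc 0 r := by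
    rintro l ⟨hl0, hlD⟩
    refine ⟨hl0, ?_⟩
    by_contra hcon
    push_neg at hcon
    have : sInf (S g s) < l := by rw [← rearr_eq, ← hr]; linarith
    obtain ⟨l', hl', hl't⟩ := exists_lt_of_csInf_lt (S_nonempty g hg h2g s) this
    have : D g l ≤ D g l' := D_antitone g hl't.le
    exact absurd (this.trans hl'.2) (not_le.mpr hlD)
  have h1 := measure_mono (μ := (volume : Measure ℝ)) hsub1
  have h2 := measure_mono (μ := (volume : Measure ℝ)) hsub2
  rw [Real.volume_Ioo] at h1
  rw [Real.volume_Ioc] at h2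
  rw [sub_zero] at h1 h2
  exact le_antisymm h1 h2

/-- (7): measure of a sublevel slice. -/
lemma slice_meas {t : ℝ} (ht : 0 < t) (c : ℝ≥0∞) :
    volume {s : ℝ | s ∈ Ioo 0 t ∧ ENNReal.ofReal s < c} = min (ENNReal.ofReal t) c := by
  rcases le_or_gt (ENNReal.ofReal t) c with h | h
  · have : {s : ℝ | s ∈ Ioo 0 t ∧ ENNReal.ofReal s < c} = Ioo 0 t := by
      ext s
      simp only [mem_setOf_eq, mem_Ioo, and_iff_left_iff_imp]
      rintro ⟨hs0, hst⟩
      exact lt_of_lt_of_le ((ENNReal.ofReal_lt_ofReal_iff ht).mpr hst) h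
    rw [this, Real.volume_Ioo, sub_zero, min_eq_left h]
  · have hc : c ≠ ∞ := (h.trans_le le_top).ne
    have hct : c.toReal < t := by
      have h2 := (ENNReal.toReal_lt_toReal hc (ENNReal.ofReal_ne_top)).mpr h
      rwa [ENNReal.toReal_ofReal ht.le] at h2
    have : {s : ℝ | s ∈ Ioo 0 t ∧ ENNReal.ofReal s < c} = Ioo 0 c.toReal := by
      ext s
      simp only [mem_setOf_eq, mem_Ioo]
      constructor
      · rintro ⟨⟨hs0, hst⟩, hsc⟩
        exact ⟨hs0, (ENNReal.ofReal_lt_iff_lt_toReal hs0.le hc).mp hsc⟩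
      · rintro ⟨hs0, hsc⟩
        exact ⟨⟨hs0, hsc.trans hct⟩, (ENNReal.ofReal_lt_iff_lt_toReal hs0.le hc).mpr hsc⟩
    rw [this, Real.volume_Ioo, sub_zero, min_eq_right h.le, ENNReal.ofReal_toReal hc]

/-- (6): Tonelli swap. -/
lemma tonelli_rearr (g : En n → ℝ) (hg : Continuous g) (h2g : HasCompactSupport g)
    {t : ℝ} (ht : 0 < t) :
    ∫⁻ s in Ioo (0:ℝ) t, ENNReal.ofReal (rearr g s) =
      ∫⁻ l in Ioi (0:ℝ), volume {s : ℝ | s ∈ Ioo 0 t ∧ ENNReal.ofReal s < D g l} := by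
  have hD : Measurable (D g) := (D_antitone g).measurable
  set A : Set (ℝ × ℝ) :=
    {p : ℝ × ℝ | p.1 ∈ Ioo 0 t ∧ 0 < p.2 ∧ ENNReal.ofReal p.1 < D g p.2} with hA
  have hAm : MeasurableSet A := by
    apply MeasurableSet.inter
    · exact measurable_fst measurableSet_Ioo
    apply MeasurableSet.inter
    · exact measurable_snd measurableSet_Ioi
    · have hm1 : Measurable fun p : ℝ × ℝ => ENNReal.ofReal p.1 :=
        ENNReal.measurable_ofReal.comp measurable_fst
      exact measurableSet_lt (α := ℝ≥0∞) hm1 (hD.comp measurable_snd)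
  have h1 : ((volume : Measure ℝ).prod (volume : Measure ℝ)) A
      = ∫⁻ s in Ioo (0:ℝ) t, ENNReal.ofReal (rearr g s) := by
    rw [Measure.prod_apply hAm]
    rw [← lintegral_indicator measurableSet_Ioo]
    congr 1
    ext s
    rcases em (s ∈ Ioo (0:ℝ) t) with hs | hs
    · rw [indicator_of_mem hs]
      have : Prod.mk s ⁻¹' A = {l : ℝ | 0 < l ∧ ENNReal.ofReal s < D g l} := by
        ext l
        simp only [hA, mem_preimage, mem_setOf_eq]
        exact ⟨fun hh => ⟨hh.2.1, hh.2.2⟩, fun hh => ⟨hs, hh.1, hh.2⟩⟩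
      rw [this, ← ofReal_rearr_eq g hg h2g s]
    · rw [indicator_of_notMem hs]
      have : Prod.mk s ⁻¹' A = ∅ := by
        ext l
        simp only [hA, mem_preimage, mem_setOf_eq, mem_empty_iff_false, iff_false, not_and]
        intro h1; exact absurd h1 hs
      simp [this]
  have h2 : ((volume : Measure ℝ).prod (volume : Measure ℝ)) A
      = ∫⁻ l in Ioi (0:ℝ), volume {s : ℝ | s ∈ Ioo 0 t ∧ ENNReal.ofReal s < D g l} := by
    rw [Measure.prod_apply_symm hAm]
    rw [← lintegral_indicator measurableSet_Ioi]
    congr 1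
    ext l
    rcases em (l ∈ Ioi (0:ℝ)) with hl | hl
    · rw [indicator_of_mem hl]
      congr 1
      ext s; simp only [hA, mem_setOf_eq, mem_preimage]; tauto
    · rw [indicator_of_notMem hl]
      have : (fun s => (s, l)) ⁻¹' A = ∅ := by
        ext s; simp only [hA, mem_preimage, mem_setOf_eq, mem_empty_iff_false, iff_false]
        rintro ⟨-, hl2, -⟩; exact hl hl2
      simp [this]
  rw [← h1, h2]

/-- (8): upper bound by the full integral. -/
lemma lintegral_rearr_le (g : En n → ℝ) (hg : Continuous g) (h2g : HasCompactSupport g)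
    {t : ℝ} (ht : 0 < t) :
    ∫⁻ s in Ioo (0:ℝ) t, ENNReal.ofReal (rearr g s) ≤ ∫⁻ x, ENNReal.ofReal |g x| := by
  rw [tonelli_rearr g hg h2g ht]
  have hlc := lintegral_eq_lintegral_meas_lt (volume : Measure (En n))
    (f := fun x => |g x|) (Eventually.of_forall fun x => abs_nonneg _)
    (hg.abs.aemeasurable)
  rw [hlc]
  apply lintegral_mono_ae
  filter_upwards with l
  rw [slice_meas ht]
  exact min_le_right _ _

/-- (9): Hardy–Littlewood type lower bound. -/
lemma setLintegral_le_lintegral_rearr (h : En n → ℝ) (hh : Continuous h)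
    (h2h : HasCompactSupport h) {t : ℝ} (ht : 0 < t)
    {E : Set (En n)} (hEm : MeasurableSet E) (hE : volume E ≤ ENNReal.ofReal t) :
    ∫⁻ x in E, ENNReal.ofReal |h x| ≤ ∫⁻ s in Ioo (0:ℝ) t, ENNReal.ofReal (rearr h s) := by
  rw [tonelli_rearr h hh h2h ht]
  have hlc := lintegral_eq_lintegral_meas_lt ((volume : Measure (En n)).restrict E)
    (f := fun x => |h x|) (Eventually.of_forall fun x => abs_nonneg _)
    (hh.abs.aemeasurable.restrict)
  rw [hlc]
  apply lintegral_mono_ae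
  filter_upwards with l
  rw [slice_meas ht]
  have hset : MeasurableSet {x : En n | l < |h x|} := by
    exact measurableSet_lt measurable_const hh.abs.measurable
  rw [Measure.restrict_apply hset]
  apply le_min
  · exact (measure_mono inter_subset_right).trans hE
  · exact measure_mono inter_subset_left
end

section GNS
open MeasureTheory Filter Topology Set Function
open scoped ENNReal NNReal

/-- Two-sided FTC bound for compactly supported C¹ functions on ℝ. -/
lemma ftc_two_sided {c : ℝ → ℝ} (hc : ContDiff ℝ 1 c) (h2c : HasCompactSupport c) (s : ℝ) :
    2 * (‖c s‖₊ : ℝ≥0∞) ≤ ∫⁻ r, (‖deriv c r‖₊ : ℝ≥0∞) := by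
  have h1 : (‖c s‖₊ : ℝ≥0∞) ≤ ∫⁻ r in Iic s, (‖deriv c r‖₊ : ℝ≥0∞) :=
    HasCompactSupport.enorm_le_lintegral_Ici_deriv hc h2c s
  have h2 : (‖c s‖₊ : ℝ≥0∞) ≤ ∫⁻ r in Ioi s, (‖deriv c r‖₊ : ℝ≥0∞) := by
    have heq := HasCompactSupport.integral_Ioi_deriv_eq hc h2c s
    calc (‖c s‖₊ : ℝ≥0∞) = ‖∫ r in Ioi s, deriv c r‖₊ := by rw [heq, nnnorm_neg]
      _ ≤ ∫⁻ r in Ioi s, (‖deriv c r‖₊ : ℝ≥0∞) := enorm_integral_le_lintegral_enorm _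
  have hsplit : ∫⁻ r, (‖deriv c r‖₊ : ℝ≥0∞)
      = (∫⁻ r in Iic s, (‖deriv c r‖₊ : ℝ≥0∞)) + ∫⁻ r in Ioi s, (‖deriv c r‖₊ : ℝ≥0∞) := by
    rw [← lintegral_add_compl (fun r => (‖deriv c r‖₊ : ℝ≥0∞)) (measurableSet_Iic (a := s))]
    rw [compl_Iic]
  rw [hsplit, two_mul]
  exact add_le_add h1 h2

/-- Gagliardo–Nirenberg–Sobolev on the pi-space with explicit constant `1/2`. -/
lemma gns_pi {n : ℕ} (hn : 2 ≤ n) {w : (Fin n → ℝ) → ℝ} (hw : ContDiff ℝ 1 w)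
    (h2w : HasCompactSupport w) {G : (Fin n → ℝ) → ℝ≥0∞} (hG : Measurable G)
    (hbound : ∀ (x : Fin n → ℝ) (i : Fin n) (r : ℝ),
      (‖deriv (w ∘ Function.update x i) r‖₊ : ℝ≥0∞) ≤ G (Function.update x i r)) :
    ∫⁻ x, (‖w x‖₊ : ℝ≥0∞) ^ ((n : ℝ)/((n : ℝ)-1)) ≤
      (2⁻¹ * ∫⁻ x, G x) ^ ((n : ℝ)/((n : ℝ)-1)) := by
  set p : ℝ := (n : ℝ)/((n : ℝ)-1) with hp_def
  have hn1 : (1:ℝ) < n := by exact_mod_cast hn.trans_lt' one_lt_two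
  have hp : Real.HolderConjugate (n : ℝ) p := Real.HolderConjugate.conjExponent hn1
  have hcard : (Fintype.card (Fin n) : ℝ) = (n : ℝ) := by simp
  have hp' : Real.HolderConjugate (Fintype.card (Fin n)) p := by rwa [hcard]
  have key : ∀ (x : Fin n → ℝ) (i : Fin n),
      (‖w x‖₊ : ℝ≥0∞) ≤ ∫⁻ xᵢ, 2⁻¹ * G (Function.update x i xᵢ) := by
    intro x i
    have hc : ContDiff ℝ 1 (w ∘ Function.update x i) := hw.comp (contDiff_update 1 x i)
    have h2c : HasCompactSupport (w ∘ Function.update x i) :=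
      h2w.comp_isClosedEmbedding (isClosedEmbedding_update x i)
    have hftc := ftc_two_sided hc h2c (x i)
    have hval : (w ∘ Function.update x i) (x i) = w x := by
      simp [Function.update_eq_self]
    rw [hval] at hftc
    have hle : ∫⁻ r, (‖deriv (w ∘ Function.update x i) r‖₊ : ℝ≥0∞)
        ≤ ∫⁻ r, G (Function.update x i r) := lintegral_mono fun r => hbound x i r
    rw [lintegral_const_mul 2⁻¹ (by measurability : Measurable fun r => G (Function.update x i r))]
    calc (‖w x‖₊ : ℝ≥0∞) = 2⁻¹ * (2 * ‖w x‖₊) := by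
          rw [← mul_assoc, ENNReal.inv_mul_cancel (by norm_num) (by norm_num), one_mul]
      _ ≤ 2⁻¹ * ∫⁻ r, G (Function.update x i r) :=
          mul_le_mul_right (hftc.trans hle) _
  have hwm : Measurable w := hw.continuous.measurable
  calc ∫⁻ x, (‖w x‖₊ : ℝ≥0∞) ^ p
      = ∫⁻ x, ((‖w x‖₊ : ℝ≥0∞) ^ ((1:ℝ) / ((n:ℝ) - 1))) ^ (n : ℝ) := by
        congr! 2 with x
        rw [← ENNReal.rpow_mul]
        congr 1
        rw [hp_def]; ring
    _ = ∫⁻ x, ∏ _i : Fin n, (‖w x‖₊ : ℝ≥0∞) ^ ((1:ℝ) / ((n:ℝ) - 1)) := by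
        congr! 2 with x
        rw [Finset.prod_const]
        rw [← ENNReal.rpow_natCast]
        simp
    _ ≤ ∫⁻ x, ∏ i, (∫⁻ xᵢ, 2⁻¹ * G (Function.update x i xᵢ)) ^ ((1 : ℝ) / ((n:ℝ) - 1)) := by
        gcongr with x i
        · exact key x i
    _ ≤ (∫⁻ x, 2⁻¹ * G x) ^ p := by
        have hGm : Measurable fun x => 2⁻¹ * G x := hG.const_mul _
        have := MeasureTheory.lintegral_prod_lintegral_pow_le
          (fun _ : Fin n => (volume : Measure ℝ)) hp' hGm
        simp only [Fintype.card_fin] at this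
        rw [MeasureTheory.volume_pi] at *
        convert this using 1
    _ = (2⁻¹ * ∫⁻ x, G x) ^ p := by
        rw [lintegral_const_mul 2⁻¹ hG]
end GNS

section GNSEuclid
open MeasureTheory Filter Topology Set Function
open scoped ENNReal NNReal

variable {n : ℕ}

/-- transfer of lintegrals from `En n` to the pi space. -/
lemma lintegral_euclidean_eq (F : En n → ℝ≥0∞) (hF : Measurable F) :
    ∫⁻ x : En n, F x =
      ∫⁻ y : Fin n → ℝ, F ((EuclideanSpace.equiv (Fin n) ℝ).symm y) := by
  have hmp := (EuclideanSpace.volume_preserving_symm_measurableEquiv_toLp (Fin n)).symm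
  rw [← hmp.lintegral_comp hF]
  rfl

lemma deriv_update_bound {v : En n → ℝ} (hv : ContDiff ℝ 1 v)
    (x : Fin n → ℝ) (i : Fin n) (r : ℝ) :
    (‖deriv ((fun y => v ((EuclideanSpace.equiv (Fin n) ℝ).symm y)) ∘ Function.update x i) r‖₊ : ℝ≥0∞)
      ≤ (‖fderiv ℝ v ((EuclideanSpace.equiv (Fin n) ℝ).symm (Function.update x i r))‖₊ : ℝ≥0∞) := by
  set e := EuclideanSpace.equiv (Fin n) ℝ
  have h1 : HasDerivAt (fun s => e.symm (Function.update x i s))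
      (e.symm (Pi.single i 1)) r :=
    (e.symm.toContinuousLinearMap.hasFDerivAt).comp_hasDerivAt r (hasDerivAt_update x i r)
  have h2 : HasDerivAt ((fun y => v (e.symm y)) ∘ Function.update x i)
      ((fderiv ℝ v (e.symm (Function.update x i r))) (e.symm (Pi.single i 1))) r :=
    ((hv.differentiable one_ne_zero _).hasFDerivAt).comp_hasDerivAt r h1
  rw [h2.deriv]
  have hnorm : ‖e.symm (Pi.single i (1:ℝ))‖ = 1 := by
    have : e.symm (Pi.single i (1:ℝ)) = EuclideanSpace.single i (1:ℝ) := rfl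
    rw [this, EuclideanSpace.norm_single, norm_one]
  have hb := (fderiv ℝ v (e.symm (Function.update x i r))).le_opNorm (e.symm (Pi.single i 1))
  rw [hnorm, mul_one] at hb
  exact_mod_cast ENNReal.coe_le_coe.mpr (by exact_mod_cast hb)

/-- GNS on Euclidean space, `n ≥ 2`, constant `1/2`, Euclidean gradient norm. -/
lemma gns_euclidean (hn : 2 ≤ n) {v : En n → ℝ} (hv : ContDiff ℝ 1 v)
    (h2v : HasCompactSupport v) :
    ∫⁻ x : En n, (‖v x‖₊ : ℝ≥0∞) ^ ((n : ℝ)/((n : ℝ)-1)) ≤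
      (2⁻¹ * ∫⁻ x : En n, (‖fderiv ℝ v x‖₊ : ℝ≥0∞)) ^ ((n : ℝ)/((n : ℝ)-1)) := by
  set e := EuclideanSpace.equiv (Fin n) ℝ
  set w : (Fin n → ℝ) → ℝ := fun y => v (e.symm y) with hw_def
  have hfderiv_cont : Continuous (fderiv ℝ v) := hv.continuous_fderiv one_ne_zero
  set G : (Fin n → ℝ) → ℝ≥0∞ := fun y => (‖fderiv ℝ v (e.symm y)‖₊ : ℝ≥0∞) with hG_def
  have hG : Measurable G := by
    apply Measurable.coe_nnreal_ennreal
    exact (hfderiv_cont.comp e.symm.continuous).measurable.nnnorm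
  have hw : ContDiff ℝ 1 w := hv.comp e.symm.contDiff
  have h2w : HasCompactSupport w := h2v.comp_homeomorph e.symm.toHomeomorph
  have h1 : ∫⁻ x : En n, (‖v x‖₊ : ℝ≥0∞) ^ ((n : ℝ)/((n : ℝ)-1))
      = ∫⁻ y, (‖w y‖₊ : ℝ≥0∞) ^ ((n : ℝ)/((n : ℝ)-1)) := by
    apply lintegral_euclidean_eq
    exact (hv.continuous.measurable.nnnorm.coe_nnreal_ennreal).pow_const _
  have h2 : ∫⁻ x : En n, (‖fderiv ℝ v x‖₊ : ℝ≥0∞) = ∫⁻ y, G y := by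
    apply lintegral_euclidean_eq
    exact hfderiv_cont.measurable.nnnorm.coe_nnreal_ennreal
  rw [h1, h2]
  exact gns_pi hn hw h2w hG (fun x i r => deriv_update_bound hv x i r)

/-- the 1-dimensional substitute: sup bound. -/
lemma gns_one {v : En 1 → ℝ} (hv : ContDiff ℝ 1 v) (h2v : HasCompactSupport v) (x₀ : En 1) :
    (‖v x₀‖₊ : ℝ≥0∞) ≤ 2⁻¹ * ∫⁻ x : En 1, (‖fderiv ℝ v x‖₊ : ℝ≥0∞) := by
  set e := EuclideanSpace.equiv (Fin 1) ℝ
  set w : (Fin 1 → ℝ) → ℝ := fun y => v (e.symm y) with hw_def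
  have hfderiv_cont : Continuous (fderiv ℝ v) := hv.continuous_fderiv one_ne_zero
  set G : (Fin 1 → ℝ) → ℝ≥0∞ := fun y => (‖fderiv ℝ v (e.symm y)‖₊ : ℝ≥0∞) with hG_def
  have hG : Measurable G := by
    apply Measurable.coe_nnreal_ennreal
    exact (hfderiv_cont.comp e.symm.continuous).measurable.nnnorm
  have hw : ContDiff ℝ 1 w := hv.comp e.symm.contDiff
  have h2w : HasCompactSupport w := h2v.comp_homeomorph e.symm.toHomeomorph
  set x : Fin 1 → ℝ := e x₀ with hx_def
  have hc : ContDiff ℝ 1 (w ∘ Function.update x 0) := hw.comp (contDiff_update 1 x 0)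
  have h2c : HasCompactSupport (w ∘ Function.update x 0) :=
    h2w.comp_isClosedEmbedding (isClosedEmbedding_update x 0)
  have hftc := ftc_two_sided hc h2c (x 0)
  have hval : (w ∘ Function.update x 0) (x 0) = v x₀ := by
    simp only [Function.comp_apply, Function.update_eq_self, hw_def]
    congr 1
  have hupd : ∀ r : ℝ, Function.update x 0 r = fun _ : Fin 1 => r := by
    intro r
    funext j
    rw [Subsingleton.elim j 0]
    simp
  have hle : ∫⁻ r, (‖deriv (w ∘ Function.update x 0) r‖₊ : ℝ≥0∞)
      ≤ ∫⁻ r, G (Function.update x 0 r) :=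
    lintegral_mono fun r => deriv_update_bound hv x 0 r
  have htrans : ∫⁻ r, G (Function.update x 0 r) = ∫⁻ y, G y := by
    have hmp := (MeasureTheory.volume_preserving_funUnique (Fin 1) ℝ).symm
    refine Eq.trans ?_ (hmp.lintegral_comp hG)
    congr 1
    funext r
    rw [hupd r]
    rfl
  have h2int : ∫⁻ y, G y = ∫⁻ x : En 1, (‖fderiv ℝ v x‖₊ : ℝ≥0∞) :=
    (lintegral_euclidean_eq _ (hfderiv_cont.measurable.nnnorm.coe_nnreal_ennreal)).symm
  rw [hval] at hftc
  calc (‖v x₀‖₊ : ℝ≥0∞) = 2⁻¹ * (2 * ‖v x₀‖₊) := by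
        rw [← mul_assoc, ENNReal.inv_mul_cancel (by norm_num) (by norm_num), one_mul]
    _ ≤ 2⁻¹ * ∫⁻ x : En 1, (‖fderiv ℝ v x‖₊ : ℝ≥0∞) := by
        apply mul_le_mul_right
        exact hftc.trans (hle.trans (by rw [htrans, h2int]))
end GNSEuclid

section Trunc
open MeasureTheory Filter Topology Set Function
open scoped ENNReal NNReal

lemma smooth_trunc (lam eps : ℝ) (hlam : 0 ≤ lam) (heps : 0 < eps) :
    ∃ ψ : ℝ → ℝ, ContDiff ℝ 1 ψ ∧ ψ 0 = 0 ∧ (∀ a, 0 ≤ ψ a) ∧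
      (∀ a, |a| - lam - 2*eps ≤ ψ a) ∧ (∀ a, |deriv ψ a| ≤ 1) ∧
      (∀ a, |a| ≤ lam → deriv ψ a = 0) ∧ (∀ a, |a| ≤ lam → ψ a = 0) := by
  set χ : ℝ → ℝ := fun s => Real.smoothTransition ((s - lam - eps)/eps) with hχ_def
  have hχ_cont : Continuous χ :=
    Real.smoothTransition.continuous.comp (by continuity)
  have hχ_nonneg : ∀ s, 0 ≤ χ s := fun s => Real.smoothTransition.nonneg _
  have hχ_le_one : ∀ s, χ s ≤ 1 := fun s => Real.smoothTransition.le_one _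
  have hχ_zero : ∀ s, s ≤ lam + eps → χ s = 0 := by
    intro s hs
    apply Real.smoothTransition.zero_of_nonpos
    apply div_nonpos_of_nonpos_of_nonneg _ heps.le
    linarith
  have hχ_one : ∀ s, lam + 2*eps ≤ s → χ s = 1 := by
    intro s hs
    apply Real.smoothTransition.one_of_one_le
    rw [le_div_iff₀ heps]
    linarith
  set φ : ℝ → ℝ := fun u => ∫ s in (0:ℝ)..u, χ s with hφ_def
  have hφ_deriv : ∀ u, HasDerivAt φ (χ u) u := by
    intro u
    exact intervalIntegral.integral_hasDerivAt_right
      (hχ_cont.intervalIntegrable _ _)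
      (hχ_cont.stronglyMeasurableAtFilter _ _)
      hχ_cont.continuousAt
  have hφ_deriv_eq : deriv φ = χ := funext fun u => (hφ_deriv u).deriv
  have hφ_cd : ContDiff ℝ 1 φ := by
    rw [contDiff_one_iff_deriv]
    exact ⟨fun u => (hφ_deriv u).differentiableAt, by rw [hφ_deriv_eq]; exact hχ_cont⟩
  have hφ_zero : ∀ u, u ≤ lam + eps → φ u = 0 := by
    intro u hu
    show (∫ s in (0:ℝ)..u, χ s) = 0
    have : EqOn χ (fun _ => (0:ℝ)) (Set.uIcc 0 u) := by
      intro s hs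
      apply hχ_zero
      rcases le_total 0 u with h | h
      · rw [Set.uIcc_of_le h] at hs; exact hs.2.trans hu
      · rw [Set.uIcc_of_ge h] at hs
        have : s ≤ 0 := hs.2
        linarith
    rw [intervalIntegral.integral_congr this]
    simp
  have hφ_nonneg : ∀ u, 0 ≤ φ u := by
    intro u
    rcases le_total 0 u with h | h
    · apply intervalIntegral.integral_nonneg h
      intro s _; exact hχ_nonneg s
    · rw [hφ_zero u (by linarith)]
  have hφ_ge : ∀ u, u - lam - 2*eps ≤ φ u := by
    intro u
    rcases le_total u (lam + 2*eps) with h | h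
    · linarith [hφ_nonneg u]
    · have h0 : (0:ℝ) ≤ lam + 2*eps := by linarith
      have hsplit : φ u = (∫ s in (0:ℝ)..(lam + 2*eps), χ s) + ∫ s in (lam + 2*eps)..u, χ s := by
        rw [hφ_def]
        exact (intervalIntegral.integral_add_adjacent_intervals
          (hχ_cont.intervalIntegrable _ _) (hχ_cont.intervalIntegrable _ _)).symm
      have h1 : (0:ℝ) ≤ ∫ s in (0:ℝ)..(lam + 2*eps), χ s :=
        intervalIntegral.integral_nonneg h0 fun s _ => hχ_nonneg s
      have h2 : ∫ s in (lam + 2*eps)..u, χ s = u - (lam + 2*eps) := by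
        have : EqOn χ (fun _ => (1:ℝ)) (Set.uIcc (lam + 2*eps) u) := by
          intro s hs
          rw [Set.uIcc_of_le h] at hs
          exact hχ_one s hs.1
        rw [intervalIntegral.integral_congr this]
        simp
      rw [hsplit, h2]
      linarith
  set ψ : ℝ → ℝ := fun a => φ |a| with hψ_def
  have hlampos : 0 < lam + eps := by linarith
  -- local descriptions
  have hψ_zero_near : ∀ a, |a| < lam + eps → ψ =ᶠ[𝓝 a] fun _ => (0:ℝ) := by
    intro a ha
    have hopen : IsOpen {b : ℝ | |b| < lam + eps} := isOpen_lt (continuous_abs) continuous_const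
    filter_upwards [hopen.mem_nhds ha] with b hb
    exact hφ_zero _ (le_of_lt hb)
  have hψ_eq_pos : ∀ a : ℝ, 0 < a → ψ =ᶠ[𝓝 a] φ := by
    intro a ha
    filter_upwards [(isOpen_lt continuous_const continuous_id).mem_nhds ha] with b hb
    show φ |b| = φ b
    rw [abs_of_pos (show (0:ℝ) < b from hb)]
  have hψ_eq_neg : ∀ a : ℝ, a < 0 → ψ =ᶠ[𝓝 a] fun b => φ (-b) := by
    intro a ha
    filter_upwards [(isOpen_lt continuous_id continuous_const).mem_nhds ha] with b hb
    show φ |b| = φ (-b)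
    rw [abs_of_neg (show b < (0:ℝ) from hb)]
  have hψ_cd : ContDiff ℝ 1 ψ := by
    rw [contDiff_iff_contDiffAt]
    intro a
    rcases lt_trichotomy a 0 with ha | ha | ha
    · exact ((hφ_cd.contDiffAt).comp a (contDiffAt_id.neg)).congr_of_eventuallyEq (hψ_eq_neg a ha)
    · subst ha
      exact contDiffAt_const.congr_of_eventuallyEq
        (hψ_zero_near 0 (by simpa using hlampos))
    · exact (hφ_cd.contDiffAt).congr_of_eventuallyEq (hψ_eq_pos a ha)
  have hderiv_cases : ∀ a, deriv ψ a = 0 ∨ (0 < a ∧ deriv ψ a = χ a) ∨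
      (a < 0 ∧ deriv ψ a = -χ (-a)) := by
    intro a
    rcases lt_or_ge |a| (lam + eps) with ha | ha
    · left
      rw [(hψ_zero_near a ha).deriv_eq]
      simp
    · have hane : a ≠ 0 := by
        intro h; rw [h] at ha; simp at ha; linarith
      rcases hane.lt_or_gt with hneg | hpos
      · right; right
        refine ⟨hneg, ?_⟩
        rw [(hψ_eq_neg a hneg).deriv_eq]
        have : HasDerivAt (fun b => φ (-b)) (χ (-a) * (-1)) a :=
          (hφ_deriv (-a)).comp a (hasDerivAt_neg a)
        rw [this.deriv]
        ring
      · right; left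
        refine ⟨hpos, ?_⟩
        rw [(hψ_eq_pos a hpos).deriv_eq, hφ_deriv_eq]
  have hψ_deriv_bd : ∀ a, |deriv ψ a| ≤ 1 := by
    intro a
    rcases hderiv_cases a with h | ⟨-, h⟩ | ⟨-, h⟩ <;> rw [h]
    · simp
    · rw [abs_of_nonneg (hχ_nonneg a)]; exact hχ_le_one a
    · rw [abs_neg, abs_of_nonneg (hχ_nonneg _)]; exact hχ_le_one _
  have hψ_deriv_zero : ∀ a, |a| ≤ lam → deriv ψ a = 0 := by
    intro a ha
    have hlt : |a| < lam + eps := by linarith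
    rw [(hψ_zero_near a hlt).deriv_eq]
    simp
  refine ⟨ψ, hψ_cd, ?_, fun a => hφ_nonneg _, fun a => hφ_ge _, hψ_deriv_bd, hψ_deriv_zero,
    fun a ha => hφ_zero |a| (by linarith)⟩
  simp only [hψ_def, abs_zero]
  exact hφ_zero 0 (by linarith)
end Trunc

section BallVol
open MeasureTheory Filter Topology Set
open scoped ENNReal NNReal

lemma ballVol_pos {n : ℕ} : 0 < ballVol n := by
  rw [ballVol]
  apply ENNReal.toReal_pos
  · exact (Metric.measure_ball_pos volume (0 : En n) one_pos).ne'
  · exact measure_ball_lt_top.ne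

lemma volume_ball_le {n : ℕ} :
    volume (Metric.ball (0 : En n) 1) ≤ ENNReal.ofReal (2 ^ n) := by
  have hsub : Metric.ball (0 : En n) 1 ⊆
      ((MeasurableEquiv.toLp 2 (Fin n → ℝ)).symm) ⁻¹' (Set.pi Set.univ fun _ : Fin n => Icc (-1:ℝ) 1) := by
    intro x hx
    simp only [Metric.mem_ball, dist_zero_right] at hx
    intro i _
    have hxi : |((MeasurableEquiv.toLp 2 (Fin n → ℝ)).symm) x i| ≤ ‖x‖ := by
      have heq : ((MeasurableEquiv.toLp 2 (Fin n → ℝ)).symm) x i = x i := rfl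
      rw [heq]
      rw [EuclideanSpace.norm_eq]
      calc |x i| = Real.sqrt (‖x i‖^2) := by
            rw [Real.sqrt_sq_eq_abs]; rw [Real.norm_eq_abs, abs_abs]
        _ ≤ Real.sqrt (∑ j, ‖x j‖^2) := by
            apply Real.sqrt_le_sqrt
            exact Finset.single_le_sum (f := fun j => ‖x j‖^2)
              (fun j _ => sq_nonneg _) (Finset.mem_univ i)
    constructor <;> [linarith [neg_abs_le (((MeasurableEquiv.toLp 2 (Fin n → ℝ)).symm) x i)];
      linarith [le_abs_self (((MeasurableEquiv.toLp 2 (Fin n → ℝ)).symm) x i)]]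
  have hm : MeasurableSet (Set.pi Set.univ fun _ : Fin n => Icc (-1:ℝ) 1) :=
    MeasurableSet.univ_pi fun _ => measurableSet_Icc
  calc volume (Metric.ball (0 : En n) 1)
      ≤ volume (((MeasurableEquiv.toLp 2 (Fin n → ℝ)).symm) ⁻¹' (Set.pi Set.univ fun _ : Fin n => Icc (-1:ℝ) 1)) :=
        measure_mono hsub
    _ = volume (Set.pi Set.univ fun _ : Fin n => Icc (-1:ℝ) 1) :=
        (EuclideanSpace.volume_preserving_symm_measurableEquiv_toLp (Fin n)).measure_preimage hm.nullMeasurableSet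
    _ = ∏ _i : Fin n, volume (Icc (-1:ℝ) 1) := volume_pi_pi _
    _ = ENNReal.ofReal (2 ^ n) := by
        rw [Real.volume_Icc]
        norm_num
lemma ballVol_le {n : ℕ} : ballVol n ≤ 2 ^ n := by
  rw [ballVol]
  rw [← ENNReal.toReal_ofReal (by positivity : (0:ℝ) ≤ 2 ^ n)]
  exact ENNReal.toReal_mono (by simp) volume_ball_le

lemma half_le_ballVol_rpow {n : ℕ} (hn : 0 < n) :
    (1/2 : ℝ) ≤ ballVol n ^ (-(1:ℝ) / n) := by
  have h1 : ballVol n ^ ((1:ℝ)/n) ≤ 2 := by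
    calc ballVol n ^ ((1:ℝ)/n) ≤ (2 ^ n : ℝ) ^ ((1:ℝ)/n) := by
          apply Real.rpow_le_rpow ballVol_pos.le ballVol_le (by positivity)
      _ = 2 := by
          rw [← Real.rpow_natCast 2 n, ← Real.rpow_mul (by norm_num)]
          rw [mul_one_div, div_self (by exact_mod_cast hn.ne' : (n:ℝ) ≠ 0), Real.rpow_one]
  have h2 : ballVol n ^ (-(1:ℝ)/n) = (ballVol n ^ ((1:ℝ)/n))⁻¹ := by
    rw [← Real.rpow_neg_one (ballVol n ^ ((1:ℝ)/n)), ← Real.rpow_mul ballVol_pos.le]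
    congr 1
    ring
  rw [h2]
  rw [le_inv_comm₀ (by norm_num) (Real.rpow_pos_of_pos ballVol_pos _)]
  calc ballVol n ^ ((1:ℝ)/n) ≤ 2 := h1
    _ = (1/2 : ℝ)⁻¹ := by norm_num
end BallVol

section Conv
open MeasureTheory Filter Topology Set
open scoped ENNReal NNReal

variable {n : ℕ}

/-- conversion: interval integral of the rearrangement as an `ℝ≥0∞` integral. -/
lemma interval_eq_lintegral (g : En n → ℝ) (hg : Continuous g) (h2g : HasCompactSupport g)
    {t : ℝ} (ht : 0 < t) :
    ∫ s in (0:ℝ)..t, rearr g s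
      = (∫⁻ s in Ioo (0:ℝ) t, ENNReal.ofReal (rearr g s)).toReal := by
  rw [intervalIntegral.integral_of_le ht.le, integral_Ioc_eq_integral_Ioo]
  rw [MeasureTheory.integral_eq_lintegral_of_nonneg_ae]
  · filter_upwards with s
    exact Osc.rearr_nonneg g hg h2g s
  · exact ((Osc.rearr_antitone g hg h2g).measurable).aestronglyMeasurable

/-- truncation comparison. -/
lemma rearr_trunc_le (f : En n → ℝ) (hf : Continuous f) (h2f : HasCompactSupport f)
    {lam : ℝ} (hlam : 0 ≤ lam) (s : ℝ) :
    rearr f s ≤ lam + rearr (fun x => max (|f x| - lam) 0) s := by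
  set g : En n → ℝ := fun x => max (|f x| - lam) 0 with hg_def
  have hg_cont : Continuous g := (hf.abs.sub continuous_const).max continuous_const
  have hg_supp : HasCompactSupport g := by
    apply h2f.comp_left (g := fun r => max (|r| - lam) 0)
    simp only [abs_zero, zero_sub]
    exact max_eq_right (by linarith)
  set r := rearr g s with hr_def
  have hr0 : 0 ≤ r := Osc.rearr_nonneg g hg_cont hg_supp s
  have hmem : lam + r ∈ Osc.S f s := by
    constructor
    · linarith
    · have hsets : {x : En n | lam + r < |f x|} = {x : En n | r < |g x|} := by
        ext x
        simp only [mem_setOf_eq, hg_def]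
        rw [abs_of_nonneg (le_max_right (|f x| - lam) 0)]
        constructor
        · intro hx
          exact lt_max_iff.mpr (Or.inl (by linarith))
        · intro hx
          rcases lt_max_iff.mp hx with h | h
          · linarith
          · linarith
      rw [hsets]
      exact Osc.dist_rearr_le g hg_cont hg_supp s
  exact csInf_le (Osc.bddBelow_S f s) hmem

/-- finiteness of `∫⁻ ofReal (rearr g)` over `Ioo 0 t`. -/
lemma lintegral_rearr_lt_top (g : En n → ℝ) (hg : Continuous g) (h2g : HasCompactSupport g)
    {t : ℝ} (ht : 0 < t) :
    (∫⁻ s in Ioo (0:ℝ) t, ENNReal.ofReal (rearr g s)) < ∞ := by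
  obtain ⟨M, hM0, hM⟩ := Osc.exists_bound g hg h2g
  calc ∫⁻ s in Ioo (0:ℝ) t, ENNReal.ofReal (rearr g s)
      ≤ ∫⁻ _s in Ioo (0:ℝ) t, ENNReal.ofReal M := by
        apply lintegral_mono_ae
        filter_upwards with s
        exact ENNReal.ofReal_le_ofReal (Osc.rearr_le_of_bound hM0 hM s)
    _ = ENNReal.ofReal M * volume (Ioo (0:ℝ) t) := by rw [lintegral_const, Measure.restrict_apply_univ]
    _ < ∞ := by
        rw [Real.volume_Ioo]
        exact ENNReal.mul_lt_top ENNReal.ofReal_lt_top ENNReal.ofReal_lt_top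
end Conv

section EpsStep
open MeasureTheory Filter Topology Set
open scoped ENNReal NNReal

lemma eps_step {n : ℕ} (hn : 0 < n) (f : En n → ℝ) (hf1 : ContDiff ℝ 1 f)
    (hf2 : HasCompactSupport f)
    {lam : ℝ} (hlam : 0 ≤ lam) {eps : ℝ} (heps : 0 < eps) {t : ℝ} (ht : 0 < t)
    (hE : volume {x : En n | lam < |f x|} ≤ ENNReal.ofReal t) :
    ∫⁻ x, ENNReal.ofReal (max (|f x| - lam) 0)
      ≤ (ENNReal.ofReal t) ^ ((1:ℝ)/(n:ℝ)) *
          (2⁻¹ * ∫⁻ x in {x : En n | lam < |f x|}, ENNReal.ofReal ‖fderiv ℝ f x‖)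
        + ENNReal.ofReal (2*eps) * ENNReal.ofReal t := by
  obtain ⟨ψ, hψ_cd, hψ0, hψ_nonneg, hψ_ge, hψ_bd, hψ_dz, hψ_supp⟩ := smooth_trunc lam eps hlam heps
  set E' : Set (En n) := {x : En n | lam < |f x|} with hE'_def
  have hE'm : MeasurableSet E' :=
    (isOpen_lt continuous_const hf1.continuous.abs).measurableSet
  set u : En n → ℝ := fun x => ψ (f x) with hu_def
  have hu_cd : ContDiff ℝ 1 u := hψ_cd.comp hf1
  have h2u : HasCompactSupport u := hf2.comp_left (g := ψ) hψ0
  -- pointwise comparison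
  have hpt : ∀ x, ENNReal.ofReal (max (|f x| - lam) 0)
      ≤ ENNReal.ofReal (u x) + E'.indicator (fun _ => ENNReal.ofReal (2*eps)) x := by
    intro x
    by_cases hx : x ∈ E'
    · rw [indicator_of_mem hx]
      have h1 : max (|f x| - lam) 0 ≤ u x + 2*eps := by
        apply max_le
        · have := hψ_ge (f x); linarith
        · have := hψ_nonneg (f x); linarith
      calc ENNReal.ofReal (max (|f x| - lam) 0) ≤ ENNReal.ofReal (u x + 2*eps) :=
            ENNReal.ofReal_le_ofReal h1
        _ = ENNReal.ofReal (u x) + ENNReal.ofReal (2*eps) :=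
            ENNReal.ofReal_add (hψ_nonneg _) (by linarith)
    · rw [indicator_of_notMem hx, add_zero]
      have hfx : |f x| ≤ lam := not_lt.mp hx
      have : max (|f x| - lam) 0 = 0 := max_eq_right (by linarith)
      rw [this]
      simp
  -- gradient bound
  have hgrad : ∀ x, (‖fderiv ℝ u x‖₊ : ℝ≥0∞)
      ≤ E'.indicator (fun y => ENNReal.ofReal ‖fderiv ℝ f y‖) x := by
    intro x
    have hder : HasFDerivAt u ((deriv ψ (f x)) • fderiv ℝ f x) x :=
      ((hψ_cd.differentiable one_ne_zero (f x)).hasDerivAt).comp_hasFDerivAt x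
        ((hf1.differentiable one_ne_zero x).hasFDerivAt)
    rw [hder.fderiv]
    by_cases hx : x ∈ E'
    · rw [indicator_of_mem hx]
      rw [← enorm_eq_nnnorm, ← ofReal_norm]
      apply ENNReal.ofReal_le_ofReal
      rw [norm_smul]
      calc ‖deriv ψ (f x)‖ * ‖fderiv ℝ f x‖ ≤ 1 * ‖fderiv ℝ f x‖ := by
            apply mul_le_mul_of_nonneg_right _ (norm_nonneg _)
            rw [Real.norm_eq_abs]; exact hψ_bd (f x)
        _ = ‖fderiv ℝ f x‖ := one_mul _
    · rw [indicator_of_notMem hx]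
      have hfx : |f x| ≤ lam := not_lt.mp hx
      rw [hψ_dz (f x) hfx]
      simp
  have hgrad_int : ∫⁻ x, (‖fderiv ℝ u x‖₊ : ℝ≥0∞)
      ≤ ∫⁻ x in E', ENNReal.ofReal ‖fderiv ℝ f x‖ := by
    calc ∫⁻ x, (‖fderiv ℝ u x‖₊ : ℝ≥0∞)
        ≤ ∫⁻ x, E'.indicator (fun y => ENNReal.ofReal ‖fderiv ℝ f y‖) x := lintegral_mono hgrad
      _ = ∫⁻ x in E', ENNReal.ofReal ‖fderiv ℝ f x‖ := lintegral_indicator hE'm _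
  have husupp : ∀ x, x ∉ E' → u x = 0 := fun x hx => hψ_supp (f x) (not_lt.mp hx)
  have hofReal_u : ∀ x, ENNReal.ofReal (u x) = (‖u x‖₊ : ℝ≥0∞) := by
    intro x
    rw [← enorm_eq_nnnorm, ← ofReal_norm, Real.norm_eq_abs, abs_of_nonneg (hψ_nonneg _)]
  -- the Sobolev bound
  have hsob : ∫⁻ x, ENNReal.ofReal (u x)
      ≤ (ENNReal.ofReal t) ^ ((1:ℝ)/(n:ℝ)) * (2⁻¹ * ∫⁻ x, (‖fderiv ℝ u x‖₊ : ℝ≥0∞)) := by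
    have hn1 : n = 1 ∨ 2 ≤ n := by omega
    rcases hn1 with hn1 | hn2
    · subst hn1
      set K := 2⁻¹ * ∫⁻ x, (‖fderiv ℝ u x‖₊ : ℝ≥0∞) with hK_def
      calc ∫⁻ x, ENNReal.ofReal (u x)
          = ∫⁻ x, E'.indicator (fun y => (‖u y‖₊ : ℝ≥0∞)) x := by
            apply lintegral_congr
            intro x
            by_cases hx : x ∈ E'
            · rw [indicator_of_mem hx, hofReal_u]
            · rw [indicator_of_notMem hx, husupp x hx]
              simp
        _ ≤ ∫⁻ x, E'.indicator (fun _ => K) x := by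
            apply lintegral_mono
            intro x
            apply indicator_le_indicator
            exact gns_one hu_cd h2u x
        _ = K * volume E' := by
            rw [lintegral_indicator_const hE'm]
        _ ≤ K * ENNReal.ofReal t := mul_le_mul_right hE _
        _ = (ENNReal.ofReal t) ^ ((1:ℝ)/((1:ℕ):ℝ)) * K := by
            rw [mul_comm]
            congr 1
            norm_num
    · have hn1R : (1:ℝ) < (n:ℝ) := by exact_mod_cast hn2
      set p : ℝ := (n:ℝ)/((n:ℝ)-1) with hp_def
      have hpq : Real.HolderConjugate p (n:ℝ) := (Real.HolderConjugate.conjExponent hn1R).symm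
      have hum : AEMeasurable (fun x => (‖u x‖₊ : ℝ≥0∞)) (volume : Measure (En n)) :=
        (hu_cd.continuous.measurable.nnnorm.coe_nnreal_ennreal).aemeasurable
      have him : AEMeasurable (E'.indicator (fun _ => (1:ℝ≥0∞))) (volume : Measure (En n)) :=
        (Measurable.indicator measurable_const hE'm).aemeasurable
      have hholder := ENNReal.lintegral_mul_le_Lp_mul_Lq (volume : Measure (En n)) hpq hum him
      have heq1 : ∫⁻ x, ((fun x => (‖u x‖₊ : ℝ≥0∞)) * E'.indicator (fun _ => (1:ℝ≥0∞))) x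
          = ∫⁻ x, ENNReal.ofReal (u x) := by
        apply lintegral_congr
        intro x
        simp only [Pi.mul_apply]
        by_cases hx : x ∈ E'
        · rw [indicator_of_mem hx, mul_one, hofReal_u]
        · rw [indicator_of_notMem hx, mul_zero, husupp x hx]
          simp
      have heq2 : ∫⁻ x, (E'.indicator (fun _ => (1:ℝ≥0∞)) x) ^ (n:ℝ) = volume E' := by
        have : ∀ x, (E'.indicator (fun _ => (1:ℝ≥0∞)) x) ^ (n:ℝ)
            = E'.indicator (fun _ => (1:ℝ≥0∞)) x := by
          intro x
          by_cases hx : x ∈ E'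
          · rw [indicator_of_mem hx, ENNReal.one_rpow]
          · rw [indicator_of_notMem hx, ENNReal.zero_rpow_of_pos (by positivity)]
        rw [lintegral_congr this, lintegral_indicator_const hE'm, one_mul]
      have h1 : (∫⁻ x, (‖u x‖₊ : ℝ≥0∞) ^ p) ^ ((1:ℝ)/p)
          ≤ 2⁻¹ * ∫⁻ x, (‖fderiv ℝ u x‖₊ : ℝ≥0∞) := by
        have hg := gns_euclidean hn2 hu_cd h2u
        have hp0 : p ≠ 0 := hpq.ne_zero
        calc (∫⁻ x, (‖u x‖₊ : ℝ≥0∞) ^ p) ^ ((1:ℝ)/p)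
            ≤ ((2⁻¹ * ∫⁻ x, (‖fderiv ℝ u x‖₊ : ℝ≥0∞)) ^ p) ^ ((1:ℝ)/p) :=
              ENNReal.rpow_le_rpow hg hpq.one_div_nonneg
          _ = 2⁻¹ * ∫⁻ x, (‖fderiv ℝ u x‖₊ : ℝ≥0∞) := by
              rw [← ENNReal.rpow_mul, mul_one_div, div_self hp0, ENNReal.rpow_one]
      have h2 : (∫⁻ x, (E'.indicator (fun _ => (1:ℝ≥0∞)) x) ^ (n:ℝ)) ^ ((1:ℝ)/(n:ℝ))
          ≤ (ENNReal.ofReal t) ^ ((1:ℝ)/(n:ℝ)) := by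
        rw [heq2]
        exact ENNReal.rpow_le_rpow hE (by positivity)
      calc ∫⁻ x, ENNReal.ofReal (u x)
          = ∫⁻ x, ((fun x => (‖u x‖₊ : ℝ≥0∞)) * E'.indicator (fun _ => (1:ℝ≥0∞))) x := heq1.symm
        _ ≤ (∫⁻ x, (‖u x‖₊ : ℝ≥0∞) ^ p) ^ ((1:ℝ)/p)
            * (∫⁻ x, (E'.indicator (fun _ => (1:ℝ≥0∞)) x) ^ (n:ℝ)) ^ ((1:ℝ)/(n:ℝ)) := hholder
        _ ≤ (2⁻¹ * ∫⁻ x, (‖fderiv ℝ u x‖₊ : ℝ≥0∞)) * (ENNReal.ofReal t) ^ ((1:ℝ)/(n:ℝ)) :=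
            mul_le_mul' h1 h2
        _ = (ENNReal.ofReal t) ^ ((1:ℝ)/(n:ℝ)) * (2⁻¹ * ∫⁻ x, (‖fderiv ℝ u x‖₊ : ℝ≥0∞)) :=
            mul_comm _ _
  -- assemble
  calc ∫⁻ x, ENNReal.ofReal (max (|f x| - lam) 0)
      ≤ ∫⁻ x, (ENNReal.ofReal (u x) + E'.indicator (fun _ => ENNReal.ofReal (2*eps)) x) :=
        lintegral_mono hpt
    _ = (∫⁻ x, ENNReal.ofReal (u x)) + ∫⁻ x, E'.indicator (fun _ => ENNReal.ofReal (2*eps)) x := by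
        rw [lintegral_add_right]
        exact Measurable.indicator measurable_const hE'm
    _ ≤ (ENNReal.ofReal t) ^ ((1:ℝ)/(n:ℝ)) * (2⁻¹ * ∫⁻ x, (‖fderiv ℝ u x‖₊ : ℝ≥0∞))
        + ENNReal.ofReal (2*eps) * ENNReal.ofReal t := by
        apply add_le_add hsob
        rw [lintegral_indicator_const hE'm]
        exact mul_le_mul_right hE _
    _ ≤ (ENNReal.ofReal t) ^ ((1:ℝ)/(n:ℝ)) *
          (2⁻¹ * ∫⁻ x in E', ENNReal.ofReal ‖fderiv ℝ f x‖)
        + ENNReal.ofReal (2*eps) * ENNReal.ofReal t := by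
        apply add_le_add_left
        apply mul_le_mul_right
        exact mul_le_mul_right hgrad_int _
end EpsStep

/-- The oscillation inequality: for `f ∈ C₀^∞(ℝ^n)` and `t > 0`,
`f**(t) − f*(t) ≤ γ_n^{-1/n} t^{1/n} |∇f|**(t)`. -/
theorem oscillation_inequality {n : ℕ} (hn : 0 < n) (f : En n → ℝ) (hf : SmoothC f)
    (t : ℝ) (ht : 0 < t) :
    dstar f t - rearr f t ≤
      ballVol n ^ (-(1:ℝ) / n) * t ^ ((1:ℝ) / n) * dstar (gradNorm f) t := by
  simp only [dstar]
  obtain ⟨hfs, hfcsupp⟩ := hf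
  have hf1 : ContDiff ℝ 1 f := hfs.of_le (by simp)
  have hfcont : Continuous f := hfs.continuous
  have hgc : Continuous (gradNorm f) := (hfs.continuous_fderiv (by simp)).norm
  have hgs : HasCompactSupport (gradNorm f) := (hfcsupp.fderiv (𝕜 := ℝ)).norm
  set lam := rearr f t with hlam_def
  have hlam0 : 0 ≤ lam := Osc.rearr_nonneg f hfcont hfcsupp t
  set E' : Set (En n) := {x | lam < |f x|} with hE'_def
  have hE'm : MeasurableSet E' :=
    (isOpen_lt continuous_const hfcont.abs).measurableSet
  have hE : volume E' ≤ ENNReal.ofReal t := Osc.dist_rearr_le f hfcont hfcsupp t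
  set g : En n → ℝ := fun x => max (|f x| - lam) 0 with hg_def
  have hg_cont : Continuous g := (hfcont.abs.sub continuous_const).max continuous_const
  have hg_supp : HasCompactSupport g := by
    apply hfcsupp.comp_left (g := fun r => max (|r| - lam) 0)
    simp only [abs_zero, zero_sub]
    exact max_eq_right (by linarith)
  set If := ∫⁻ s in Ioo (0:ℝ) t, ENNReal.ofReal (rearr f s) with hIf_def
  set Ih := ∫⁻ s in Ioo (0:ℝ) t, ENNReal.ofReal (rearr (gradNorm f) s) with hIh_def
  set B := ENNReal.ofReal lam * ENNReal.ofReal t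
      + (ENNReal.ofReal t) ^ ((1:ℝ)/(n:ℝ)) * (2⁻¹ * Ih) with hB_def
  have hkey : ∀ eps : ℝ, 0 < eps →
      If ≤ B + ENNReal.ofReal (2*eps) * ENNReal.ofReal t := by
    intro eps heps
    have step1 : If ≤ ENNReal.ofReal lam * ENNReal.ofReal t
        + ∫⁻ s in Ioo (0:ℝ) t, ENNReal.ofReal (rearr g s) := by
      calc If ≤ ∫⁻ s in Ioo (0:ℝ) t,
            (ENNReal.ofReal lam + ENNReal.ofReal (rearr g s)) := by
            apply lintegral_mono_ae
            filter_upwards with s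
            calc ENNReal.ofReal (rearr f s) ≤ ENNReal.ofReal (lam + rearr g s) :=
                  ENNReal.ofReal_le_ofReal (rearr_trunc_le f hfcont hfcsupp hlam0 s)
              _ = ENNReal.ofReal lam + ENNReal.ofReal (rearr g s) :=
                  ENNReal.ofReal_add hlam0 (Osc.rearr_nonneg g hg_cont hg_supp s)
        _ = ENNReal.ofReal lam * ENNReal.ofReal t
            + ∫⁻ s in Ioo (0:ℝ) t, ENNReal.ofReal (rearr g s) := by
            rw [lintegral_add_left measurable_const]
            congr 1
            rw [lintegral_const, Measure.restrict_apply_univ, Real.volume_Ioo, sub_zero]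
    have step2 : ∫⁻ s in Ioo (0:ℝ) t, ENNReal.ofReal (rearr g s)
        ≤ ∫⁻ x, ENNReal.ofReal (g x) := by
      calc ∫⁻ s in Ioo (0:ℝ) t, ENNReal.ofReal (rearr g s)
          ≤ ∫⁻ x, ENNReal.ofReal (|g x|) := lintegral_rearr_le g hg_cont hg_supp ht
        _ = ∫⁻ x, ENNReal.ofReal (g x) := by
            apply lintegral_congr
            intro x
            rw [abs_of_nonneg (le_max_right (|f x| - lam) 0)]
    have step3 := eps_step hn f hf1 hfcsupp hlam0 heps ht hE
    have step4 : ∫⁻ x in E', ENNReal.ofReal ‖fderiv ℝ f x‖ ≤ Ih := by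
      have hHL := setLintegral_le_lintegral_rearr (gradNorm f) hgc hgs ht hE'm hE
      calc ∫⁻ x in E', ENNReal.ofReal ‖fderiv ℝ f x‖
          = ∫⁻ x in E', ENNReal.ofReal (|gradNorm f x|) := by
            apply lintegral_congr
            intro x
            have : |gradNorm f x| = ‖fderiv ℝ f x‖ := abs_of_nonneg (norm_nonneg _)
            rw [this]
        _ ≤ Ih := hHL
    calc If ≤ ENNReal.ofReal lam * ENNReal.ofReal t
          + ∫⁻ s in Ioo (0:ℝ) t, ENNReal.ofReal (rearr g s) := step1
      _ ≤ ENNReal.ofReal lam * ENNReal.ofReal t + ∫⁻ x, ENNReal.ofReal (g x) :=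
          add_le_add_right step2 _
      _ ≤ ENNReal.ofReal lam * ENNReal.ofReal t
          + ((ENNReal.ofReal t) ^ ((1:ℝ)/(n:ℝ)) *
              (2⁻¹ * ∫⁻ x in E', ENNReal.ofReal ‖fderiv ℝ f x‖)
            + ENNReal.ofReal (2*eps) * ENNReal.ofReal t) :=
          add_le_add_right step3 _
      _ ≤ ENNReal.ofReal lam * ENNReal.ofReal t
          + ((ENNReal.ofReal t) ^ ((1:ℝ)/(n:ℝ)) * (2⁻¹ * Ih)
            + ENNReal.ofReal (2*eps) * ENNReal.ofReal t) := by
          apply add_le_add_right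
          apply add_le_add_left
          exact mul_le_mul_right (mul_le_mul_right step4 _) _
      _ = B + ENNReal.ofReal (2*eps) * ENNReal.ofReal t := by
          rw [hB_def, add_assoc]
  have hIh_top : Ih ≠ ∞ := (lintegral_rearr_lt_top _ hgc hgs ht).ne
  have hB_top : B ≠ ∞ := by
    rw [hB_def]
    apply ENNReal.add_ne_top.mpr
    constructor
    · exact ENNReal.mul_ne_top ENNReal.ofReal_ne_top ENNReal.ofReal_ne_top
    · apply ENNReal.mul_ne_top
      · exact ENNReal.rpow_ne_top_of_nonneg (by positivity) ENNReal.ofReal_ne_top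
      · exact ENNReal.mul_ne_top (by simp) hIh_top
  have hIf_le_B : If ≤ B := by
    apply ENNReal.le_of_forall_pos_le_add
    intro ε hε _
    have hepos : (0:ℝ) < (ε:ℝ) := hε
    have heps : 0 < (ε:ℝ)/(2*t) := by positivity
    refine (hkey _ heps).trans ?_
    apply add_le_add_right
    have h1 : ENNReal.ofReal (2*((ε:ℝ)/(2*t))) * ENNReal.ofReal t
        = ENNReal.ofReal ((2*((ε:ℝ)/(2*t)))*t) := (ENNReal.ofReal_mul (by positivity)).symm
    rw [h1]
    have h2 : (2*((ε:ℝ)/(2*t)))*t = (ε:ℝ) := by field_simp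
    rw [h2, ENNReal.ofReal_coe_nnreal]
  have hconv_f : ∫ s in (0:ℝ)..t, rearr f s = If.toReal :=
    interval_eq_lintegral f hfcont hfcsupp ht
  have hconv_h : ∫ s in (0:ℝ)..t, rearr (gradNorm f) s = Ih.toReal :=
    interval_eq_lintegral _ hgc hgs ht
  have htoReal : If.toReal ≤ lam * t + t^((1:ℝ)/(n:ℝ)) * (2⁻¹ * Ih.toReal) := by
    have h1 := ENNReal.toReal_mono hB_top hIf_le_B
    refine h1.trans_eq ?_
    rw [hB_def, ENNReal.toReal_add
        (ENNReal.mul_ne_top ENNReal.ofReal_ne_top ENNReal.ofReal_ne_top)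
        (ENNReal.mul_ne_top (ENNReal.rpow_ne_top_of_nonneg (by positivity) ENNReal.ofReal_ne_top)
          (ENNReal.mul_ne_top (by simp) hIh_top)),
      ENNReal.toReal_mul, ENNReal.toReal_mul, ENNReal.toReal_mul,
      ENNReal.toReal_ofReal hlam0, ← ENNReal.toReal_rpow, ENNReal.toReal_ofReal ht.le]
    norm_num
  have hIh0 : (0:ℝ) ≤ Ih.toReal := ENNReal.toReal_nonneg
  have hC : (1/2:ℝ) ≤ ballVol n ^ (-(1:ℝ)/n) := half_le_ballVol_rpow hn
  have htp : (0:ℝ) ≤ t^((1:ℝ)/(n:ℝ)) := Real.rpow_nonneg ht.le _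
  rw [hconv_f, hconv_h]
  calc (1/t) * If.toReal - lam
      ≤ (1/t) * (lam * t + t^((1:ℝ)/(n:ℝ)) * (2⁻¹ * Ih.toReal)) - lam := by
        have := mul_le_mul_of_nonneg_left htoReal (by positivity : (0:ℝ) ≤ 1/t)
        linarith
    _ = t^((1:ℝ)/(n:ℝ)) * ((1/2) * ((1/t) * Ih.toReal)) := by
        field_simp
        ring
    _ ≤ t^((1:ℝ)/(n:ℝ)) * ((ballVol n ^ (-(1:ℝ)/n)) * ((1/t) * Ih.toReal)) := by
        apply mul_le_mul_of_nonneg_left _ htp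
        apply mul_le_mul_of_nonneg_right hC (by positivity)
    _ = ballVol n ^ (-(1:ℝ)/n) * t ^ ((1:ℝ)/n) * ((1/t) * Ih.toReal) := by ring
end
end

section
/- If f, g are positive functions on (0,∞) with ∫_0^t f ≤ ∫_0^t g for all t > 0, then ∫_0^t Qf(s) ds ≤ ∫_0^t Qg(s) ds for all t > 0, where Qg(t) = ∫_t^∞ g(s) ds/s; moreover if t^α f(t) is monotone then Qf(t) ≥ c(α) f(t) (increasing case, α with 1−2^{-α} ≥ 0) or Qf(t) ≥ c(α) f(2t) (decreasing case), with c(α) = |1−2^{-α}|/|α| (and c(0)=1/2). -/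
open MeasureTheory Filter Topology Set
open scoped ENNReal

noncomputable section

/-- The Hardy operator `Qf(t) = ∫_t^∞ f(s) ds/s`. -/
def Qop (f : ℝ → ℝ) (t : ℝ) : ℝ := ∫ s in Set.Ioi t, f s / s

/-- The constant `(1 − 2^{-α})/α` (with value `1/2` at `α = 0`). -/
def cInc (α : ℝ) : ℝ := if α = 0 then 1 / 2 else (1 - (2:ℝ) ^ (-α)) / α

/-- The constant `(2^α − 1)/α` (with value `1/2` at `α = 0`). -/
def cDec (α : ℝ) : ℝ := if α = 0 then 1 / 2 else ((2:ℝ) ^ α - 1) / α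

/- ### Auxiliary lemmas -/

private lemma vol_Iio_inter_Ioc {u t : ℝ} (ht : 0 < t) :
    volume (Set.Iio u ∩ Set.Ioc 0 t) = ENNReal.ofReal (min u t) := by
  rcases le_or_gt u 0 with hu | hu
  · have he : Set.Iio u ∩ Set.Ioc 0 t = ∅ := by
      ext s
      simp only [Set.mem_inter_iff, Set.mem_Iio, Set.mem_Ioc, Set.mem_empty_iff_false, iff_false,
        not_and]
      intro h1 h2
      exfalso; linarith
    rw [he, measure_empty, min_eq_left (by linarith)]
    exact (ENNReal.ofReal_eq_zero.2 hu).symm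
  · rcases le_or_gt u t with h2 | h2
    · have he : Set.Iio u ∩ Set.Ioc 0 t = Set.Ioo 0 u := by
        ext s
        simp only [Set.mem_inter_iff, Set.mem_Iio, Set.mem_Ioc, Set.mem_Ioo]
        constructor
        · rintro ⟨h1, h3, h4⟩; exact ⟨h3, h1⟩
        · rintro ⟨h3, h1⟩; exact ⟨h1, h3, by linarith⟩
      rw [he, Real.volume_Ioo, min_eq_left h2, sub_zero]
    · have he : Set.Iio u ∩ Set.Ioc 0 t = Set.Ioc 0 t :=
        Set.inter_eq_right.2 fun s hs => lt_of_le_of_lt hs.2 h2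
      rw [he, Real.volume_Ioc, min_eq_right h2.le, sub_zero]

/-- The primitive `Φ_f(r) = ∫⁻_{(0,r)} f`. -/
private def Phi (f : ℝ → ℝ) (r : ℝ) : ℝ≥0∞ := ∫⁻ u in Set.Ioo 0 r, ENNReal.ofReal (f u)

private lemma Phi_mono (f : ℝ → ℝ) {r r' : ℝ} (h : r ≤ r') : Phi f r ≤ Phi f r' :=
  lintegral_mono_set (Set.Ioo_subset_Ioo_right h)

/-- Double Tonelli identity: `∫₀ᵗ Qf = ∫₀¹ Φ_f(t/λ) dλ`. -/
private lemma L_eq (f : ℝ → ℝ) (hfm : Measurable f) (hf0 : ∀ t > (0:ℝ), 0 ≤ f t)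
    (hfi : ∀ a > (0:ℝ), IntegrableOn (fun s => f s / s) (Set.Ioi a))
    {t : ℝ} (ht : 0 < t) :
    ∫⁻ s in Set.Ioc 0 t, ENNReal.ofReal (Qop f s) = ∫⁻ l in Set.Ioc 0 1, Phi f (t / l) := by
  set K : ℝ × ℝ → ℝ≥0∞ := fun p => if p.1 < p.2 then ENNReal.ofReal (f p.2 / p.2) else 0 with hK
  have hKm : Measurable K := by
    apply Measurable.ite (measurableSet_lt measurable_fst measurable_snd)
    · exact ((hfm.comp measurable_snd).div measurable_snd).ennreal_ofReal
    · exact measurable_const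
  set M : ℝ × ℝ → ℝ≥0∞ :=
    fun p => if 0 < p.1 ∧ p.1 * p.2 < t then ENNReal.ofReal (f p.1) else 0 with hM
  have hMm : Measurable M := by
    apply Measurable.ite
    · exact (measurableSet_lt measurable_const measurable_fst).inter
        (measurableSet_lt (measurable_fst.mul measurable_snd) measurable_const)
    · exact (hfm.comp measurable_fst).ennreal_ofReal
    · exact measurable_const
  calc
    ∫⁻ s in Set.Ioc 0 t, ENNReal.ofReal (Qop f s)
        = ∫⁻ s in Set.Ioc 0 t, ∫⁻ u, K (s, u) := by
          apply setLIntegral_congr_fun measurableSet_Ioc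
          intro s hs; dsimp only
          have h1 : ENNReal.ofReal (Qop f s) = ∫⁻ u in Set.Ioi s, ENNReal.ofReal (f u / u) := by
            apply ofReal_integral_eq_lintegral_ofReal (hfi s hs.1)
            refine (ae_restrict_iff' measurableSet_Ioi).2 (ae_of_all _ fun u hu => ?_)
            exact div_nonneg (hf0 u (hs.1.trans hu)) (le_of_lt (hs.1.trans hu))
          rw [h1, ← lintegral_indicator measurableSet_Ioi]
          exact lintegral_congr fun u => by
            simp [hK, Set.indicator_apply, Set.mem_Ioi]
    _ = ∫⁻ u, ∫⁻ s in Set.Ioc 0 t, K (s, u) :=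
          lintegral_lintegral_swap hKm.aemeasurable
    _ = ∫⁻ u, ∫⁻ l in Set.Ioc 0 1, M (u, l) := by
          refine lintegral_congr fun u => ?_
          have left : ∫⁻ s in Set.Ioc 0 t, K (s, u)
              = ENNReal.ofReal (f u / u) * ENNReal.ofReal (min u t) := by
            have e : ∀ s, K (s, u)
                = Set.indicator (Set.Iio u) (fun _ => ENNReal.ofReal (f u / u)) s := by
              intro s; simp [hK, Set.indicator_apply, Set.mem_Iio]
            rw [lintegral_congr e, lintegral_indicator measurableSet_Iio,
              Measure.restrict_restrict measurableSet_Iio, setLIntegral_const,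
              vol_Iio_inter_Ioc ht]
          rw [left]
          rcases le_or_gt u 0 with hu | hu
          · have h0 : ∀ l, M (u, l) = 0 := fun l => by
              simp [hM, not_lt.2 hu]
            have : min u t = u := min_eq_left (by linarith)
            rw [this, ENNReal.ofReal_eq_zero.2 hu]
            simp [h0]
          · have e : ∀ l, M (u, l)
                = Set.indicator (Set.Iio (t / u)) (fun _ => ENNReal.ofReal (f u)) l := by
              intro l
              have hiff : (0 < u ∧ u * l < t) ↔ l < t / u := by
                rw [lt_div_iff₀ hu]
                constructor
                · rintro ⟨_, h1⟩; linarith [h1]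
                · intro h1; exact ⟨hu, by linarith⟩
              simp [hM, Set.indicator_apply, Set.mem_Iio, hiff]
            rw [lintegral_congr e, lintegral_indicator measurableSet_Iio,
              Measure.restrict_restrict measurableSet_Iio, setLIntegral_const,
              vol_Iio_inter_Ioc one_pos]
            rw [← ENNReal.ofReal_mul (div_nonneg (hf0 u hu) hu.le),
              ← ENNReal.ofReal_mul (hf0 u hu)]
            congr 1
            rcases le_or_gt u t with hut | hut
            · rw [min_eq_left hut, min_eq_right ((one_le_div hu).2 hut)]
              field_simp
            · rw [min_eq_right hut.le, min_eq_left ((div_le_one hu).2 hut.le)]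
              field_simp
    _ = ∫⁻ l in Set.Ioc 0 1, ∫⁻ u, M (u, l) :=
          lintegral_lintegral_swap hMm.aemeasurable
    _ = ∫⁻ l in Set.Ioc 0 1, Phi f (t / l) := by
          apply setLIntegral_congr_fun measurableSet_Ioc
          intro l hl; dsimp only
          have hl0 : 0 < l := hl.1
          have e : ∀ u, M (u, l)
              = Set.indicator (Set.Ioo 0 (t / l)) (fun u => ENNReal.ofReal (f u)) u := by
            intro u
            have hiff : u * l < t ↔ u < t / l := lt_div_iff₀ hl0 |>.symm
            simp [hM, Set.indicator_apply, Set.mem_Ioo, hiff]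
          rw [lintegral_congr e, lintegral_indicator measurableSet_Ioo]
          rfl

/-- Evaluation of `∫_t^{2t} s^{-α-1} ds`. -/
private lemma rpow_int_eval (α : ℝ) {t : ℝ} (ht : 0 < t) :
    ∫ s in t..(2*t), s ^ (-α - 1) =
      (if α = 0 then Real.log 2 else (1 - (2:ℝ) ^ (-α)) / α) * t ^ (-α) := by
  have h2t : t ≤ 2 * t := by linarith
  have h0 : (0:ℝ) ∉ Set.uIcc t (2*t) := by
    rw [Set.uIcc_of_le h2t]
    intro hc
    exact absurd hc.1 (by linarith)
  by_cases hα : α = 0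
  · subst hα
    rw [if_pos rfl]
    have e : ∀ s ∈ Set.uIcc t (2*t), s ^ (-(0:ℝ) - 1) = s⁻¹ := by
      intro s _
      rw [show -(0:ℝ) - 1 = (-1:ℝ) by ring, Real.rpow_neg_one]
    rw [intervalIntegral.integral_congr e, integral_inv h0]
    have : (2 * t) / t = 2 := by field_simp
    rw [this]
    simp
  · have hne : -α - 1 ≠ -1 := by
      intro hc; exact hα (by linarith)
    rw [integral_rpow (Or.inr ⟨hne, h0⟩)]
    have e1 : -α - 1 + 1 = -α := by ring
    rw [e1, Real.mul_rpow (by norm_num) ht.le, if_neg hα]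
    rw [div_neg, ← neg_div, neg_sub, div_mul_eq_mul_div]
    congr 1
    ring

/-- Generic lower bound `C ∫_t^{2t} s^{-α-1} ds ≤ Qf(t)` from the pointwise bound. -/
private lemma lower_bound (f : ℝ → ℝ) (hf0 : ∀ t > (0:ℝ), 0 ≤ f t)
    (hfi : ∀ a > (0:ℝ), IntegrableOn (fun s => f s / s) (Set.Ioi a))
    (α t C : ℝ) (ht : 0 < t)
    (hkey : ∀ s ∈ Set.Ioc t (2 * t), C * s ^ (-α - 1) ≤ f s / s) :
    C * ∫ s in t..(2*t), s ^ (-α - 1) ≤ Qop f t := by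
  have h2t : t ≤ 2 * t := by linarith
  have hsub : Set.Ioc t (2*t) ⊆ Set.Ioi t := Set.Ioc_subset_Ioi_self
  have hint_r : IntegrableOn (fun s : ℝ => C * s ^ (-α-1)) (Set.Ioc t (2*t)) := by
    have h0 : (0:ℝ) ∉ Set.uIcc t (2*t) := by
      rw [Set.uIcc_of_le h2t]
      intro hc
      exact absurd hc.1 (by linarith)
    have := (intervalIntegral.intervalIntegrable_rpow (μ := volume) (r := -α-1) (a := t)
      (b := 2*t) (Or.inr h0)).const_mul C
    rwa [intervalIntegrable_iff_integrableOn_Ioc_of_le h2t] at this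
  calc C * ∫ s in t..(2*t), s ^ (-α-1)
      = ∫ s in Set.Ioc t (2*t), C * s ^ (-α-1) := by
        rw [intervalIntegral.integral_of_le h2t, ← integral_const_mul]
    _ ≤ ∫ s in Set.Ioc t (2*t), f s / s := by
        apply setIntegral_mono_on hint_r ((hfi t ht).mono_set hsub) measurableSet_Ioc hkey
    _ ≤ ∫ s in Set.Ioi t, f s / s := by
        apply setIntegral_mono_set (hfi t ht)
        · refine (ae_restrict_iff' measurableSet_Ioi).2 (ae_of_all _ fun u hu => ?_)
          exact div_nonneg (hf0 u (ht.trans hu)) (ht.trans hu).le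
        · exact HasSubset.Subset.eventuallyLE hsub

/-- If `∫₀ᵗ f ≤ ∫₀ᵗ g` for all `t > 0` then `∫₀ᵗ Qf ≤ ∫₀ᵗ Qg` for all `t > 0`;
moreover if `t^α f(t)` is increasing then `Qf(t) ≥ c(α) f(t)` and if it is
decreasing then `Qf(t) ≥ c(α) f(2t)`. -/
theorem hardy_Q_lemma (f g : ℝ → ℝ) (hfm : Measurable f) (hgm : Measurable g)
    (hf0 : ∀ t > (0:ℝ), 0 ≤ f t) (hg0 : ∀ t > (0:ℝ), 0 ≤ g t)
    (hfi : ∀ a > (0:ℝ), IntegrableOn (fun s => f s / s) (Set.Ioi a))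
    (hgi : ∀ a > (0:ℝ), IntegrableOn (fun s => g s / s) (Set.Ioi a))
    (hQf : ∀ t > (0:ℝ), IntegrableOn (Qop f) (Set.Ioc 0 t))
    (hQg : ∀ t > (0:ℝ), IntegrableOn (Qop g) (Set.Ioc 0 t))
    (h : ∀ t > (0:ℝ), (∫ s in (0:ℝ)..t, f s) ≤ ∫ s in (0:ℝ)..t, g s) :
    (∀ t > (0:ℝ), (∫ s in (0:ℝ)..t, Qop f s) ≤ ∫ s in (0:ℝ)..t, Qop g s) ∧
    (∀ α : ℝ, MonotoneOn (fun t => t ^ α * f t) (Set.Ioi 0) →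
      ∀ t > (0:ℝ), cInc α * f t ≤ Qop f t) ∧
    (∀ α : ℝ, AntitoneOn (fun t => t ^ α * f t) (Set.Ioi 0) →
      ∀ t > (0:ℝ), cDec α * f (2 * t) ≤ Qop f t) := by
  constructor
  · -- Part 1
    have hQnn : ∀ (F : ℝ → ℝ), (∀ s > (0:ℝ), 0 ≤ F s) → ∀ s > (0:ℝ), 0 ≤ Qop F s := by
      intro F hF s hs
      exact setIntegral_nonneg measurableSet_Ioi fun u hu =>
        div_nonneg (hF u (hs.trans hu)) (hs.trans hu).le
    have hQfnn := hQnn f hf0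
    have hQgnn := hQnn g hg0
    have hQfae : ∀ t > (0:ℝ), 0 ≤ᵐ[volume.restrict (Set.Ioc 0 t)] Qop f := fun t ht =>
      (ae_restrict_iff' measurableSet_Ioc).2 (ae_of_all _ fun s hs => hQfnn s hs.1)
    have hQgae : ∀ t > (0:ℝ), 0 ≤ᵐ[volume.restrict (Set.Ioc 0 t)] Qop g := fun t ht =>
      (ae_restrict_iff' measurableSet_Ioc).2 (ae_of_all _ fun s hs => hQgnn s hs.1)
    have hLf : ∀ t > (0:ℝ), ∫⁻ s in Set.Ioc 0 t, ENNReal.ofReal (Qop f s) < ⊤ := fun t ht =>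
      (hasFiniteIntegral_iff_ofReal (hQfae t ht)).1 (hQf t ht).2
    have hLg : ∀ t > (0:ℝ), ∫⁻ s in Set.Ioc 0 t, ENNReal.ofReal (Qop g s) < ⊤ := fun t ht =>
      (hasFiniteIntegral_iff_ofReal (hQgae t ht)).1 (hQg t ht).2
    -- finiteness of Phi
    have hPhi_fin : ∀ (F : ℝ → ℝ), Measurable F → (∀ s > (0:ℝ), 0 ≤ F s) →
        (∀ a > (0:ℝ), IntegrableOn (fun s => F s / s) (Set.Ioi a)) →
        (∀ t > (0:ℝ), ∫⁻ s in Set.Ioc 0 t, ENNReal.ofReal (Qop F s) < ⊤) →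
        ∀ r > (0:ℝ), Phi F r < ⊤ := by
      intro F hFm hF0 hFi hLF r hr
      have hle : Phi F r ≤ ∫⁻ l in Set.Ioc 0 1, Phi F (r / l) := by
        calc Phi F r = Phi F r * volume (Set.Ioc (0:ℝ) 1) := by
              simp [Real.volume_Ioc]
          _ = ∫⁻ _ in Set.Ioc (0:ℝ) 1, Phi F r := (setLIntegral_const _ _).symm
          _ ≤ ∫⁻ l in Set.Ioc 0 1, Phi F (r / l) := by
              refine lintegral_mono_ae ((ae_restrict_iff' measurableSet_Ioc).2
                (ae_of_all _ fun l hl => ?_))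
              refine Phi_mono F ?_
              rw [le_div_iff₀ hl.1]
              nlinarith [hl.2, hr]
      rw [← L_eq F hFm hF0 hFi hr] at hle
      exact lt_of_le_of_lt hle (hLF r hr)
    have hPhif_fin := hPhi_fin f hfm hf0 hfi hLf
    have hPhig_fin := hPhi_fin g hgm hg0 hgi hLg
    -- integrability of f, g near 0
    have hint : ∀ (F : ℝ → ℝ), Measurable F → (∀ s > (0:ℝ), 0 ≤ F s) →
        (∀ r > (0:ℝ), Phi F r < ⊤) → ∀ r > (0:ℝ), IntegrableOn F (Set.Ioo 0 r) := by
      intro F hFm hF0 hPF r hr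
      refine ⟨hFm.aestronglyMeasurable.restrict, ?_⟩
      rw [hasFiniteIntegral_iff_ofReal ((ae_restrict_iff' measurableSet_Ioo).2
        (ae_of_all _ fun u hu => hF0 u hu.1))]
      exact hPF r hr
    have hPhi_eq : ∀ (F : ℝ → ℝ), Measurable F → (∀ s > (0:ℝ), 0 ≤ F s) →
        (∀ r > (0:ℝ), Phi F r < ⊤) → ∀ r > (0:ℝ),
        Phi F r = ENNReal.ofReal (∫ s in (0:ℝ)..r, F s) := by
      intro F hFm hF0 hPF r hr
      rw [intervalIntegral.integral_of_le hr.le, integral_Ioc_eq_integral_Ioo]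
      exact (ofReal_integral_eq_lintegral_ofReal (hint F hFm hF0 hPF r hr)
        ((ae_restrict_iff' measurableSet_Ioo).2 (ae_of_all _ fun u hu => hF0 u hu.1))).symm
    have hPhi_le : ∀ r > (0:ℝ), Phi f r ≤ Phi g r := by
      intro r hr
      rw [hPhi_eq f hfm hf0 hPhif_fin r hr, hPhi_eq g hgm hg0 hPhig_fin r hr]
      exact ENNReal.ofReal_le_ofReal (h r hr)
    intro t ht
    have ef : ∫ s in (0:ℝ)..t, Qop f s
        = (∫⁻ s in Set.Ioc 0 t, ENNReal.ofReal (Qop f s)).toReal := by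
      rw [intervalIntegral.integral_of_le ht.le]
      exact integral_eq_lintegral_of_nonneg_ae (hQfae t ht) (hQf t ht).1
    have eg : ∫ s in (0:ℝ)..t, Qop g s
        = (∫⁻ s in Set.Ioc 0 t, ENNReal.ofReal (Qop g s)).toReal := by
      rw [intervalIntegral.integral_of_le ht.le]
      exact integral_eq_lintegral_of_nonneg_ae (hQgae t ht) (hQg t ht).1
    rw [ef, eg]
    refine ENNReal.toReal_mono (hLg t ht).ne ?_
    rw [L_eq f hfm hf0 hfi ht, L_eq g hgm hg0 hgi ht]
    refine lintegral_mono_ae ((ae_restrict_iff' measurableSet_Ioc).2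
      (ae_of_all _ fun l hl => ?_))
    exact hPhi_le (t / l) (div_pos ht hl.1)
  constructor
  · -- Part 2: increasing case
    intro α hmono t ht
    set C : ℝ := t ^ α * f t with hCdef
    have hkey : ∀ s ∈ Set.Ioc t (2*t), C * s ^ (-α - 1) ≤ f s / s := by
      intro s hs
      have hst : 0 < s := lt_trans ht hs.1
      have hsα : (0:ℝ) < s ^ α := Real.rpow_pos_of_pos hst α
      have hm : C ≤ s ^ α * f s := hmono (Set.mem_Ioi.2 ht) (Set.mem_Ioi.2 hst) hs.1.le
      have step : C * (s ^ α)⁻¹ ≤ f s := by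
        calc C * (s ^ α)⁻¹ ≤ (s ^ α * f s) * (s ^ α)⁻¹ :=
              mul_le_mul_of_nonneg_right hm (inv_nonneg.2 hsα.le)
          _ = f s := by field_simp
      rw [show -α - 1 = -α + -1 from by ring, Real.rpow_add hst, Real.rpow_neg_one,
        Real.rpow_neg hst.le]
      calc C * ((s ^ α)⁻¹ * s⁻¹) = (C * (s ^ α)⁻¹) * s⁻¹ := by ring
        _ ≤ f s * s⁻¹ := mul_le_mul_of_nonneg_right step (inv_nonneg.2 hst.le)
        _ = f s / s := (div_eq_mul_inv _ _).symm
    have hlb := lower_bound f hf0 hfi α t C ht hkey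
    refine le_trans ?_ hlb
    rw [rpow_int_eval α ht]
    have hid : t ^ α * t ^ (-α) = 1 := by
      rw [← Real.rpow_add ht]; simp
    have hC_eval : C * ((if α = 0 then Real.log 2 else (1 - (2:ℝ) ^ (-α)) / α) * t ^ (-α))
        = f t * (if α = 0 then Real.log 2 else (1 - (2:ℝ) ^ (-α)) / α) := by
      rw [hCdef]
      have e : t ^ α * f t * ((if α = 0 then Real.log 2 else (1 - (2:ℝ) ^ (-α)) / α) * t ^ (-α))
          = (f t * (if α = 0 then Real.log 2 else (1 - (2:ℝ) ^ (-α)) / α)) * (t ^ α * t ^ (-α)) := by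
        ring
      rw [e, hid, mul_one]
    rw [hC_eval]
    by_cases hα : α = 0
    · rw [if_pos hα, cInc, if_pos hα]
      nlinarith [Real.log_two_gt_d9, hf0 t ht]
    · rw [if_neg hα, cInc, if_neg hα]
      ring_nf
      exact le_refl _
  · -- Part 3: decreasing case
    intro α hanti t ht
    have h2t : (0:ℝ) < 2 * t := by linarith
    set C : ℝ := (2*t) ^ α * f (2*t) with hCdef
    have hkey : ∀ s ∈ Set.Ioc t (2*t), C * s ^ (-α - 1) ≤ f s / s := by
      intro s hs
      have hst : 0 < s := lt_trans ht hs.1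
      have hsα : (0:ℝ) < s ^ α := Real.rpow_pos_of_pos hst α
      have hm : C ≤ s ^ α * f s := hanti (Set.mem_Ioi.2 hst) (Set.mem_Ioi.2 h2t) hs.2
      have step : C * (s ^ α)⁻¹ ≤ f s := by
        calc C * (s ^ α)⁻¹ ≤ (s ^ α * f s) * (s ^ α)⁻¹ :=
              mul_le_mul_of_nonneg_right hm (inv_nonneg.2 hsα.le)
          _ = f s := by field_simp
      rw [show -α - 1 = -α + -1 from by ring, Real.rpow_add hst, Real.rpow_neg_one,
        Real.rpow_neg hst.le]
      calc C * ((s ^ α)⁻¹ * s⁻¹) = (C * (s ^ α)⁻¹) * s⁻¹ := by ring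
        _ ≤ f s * s⁻¹ := mul_le_mul_of_nonneg_right step (inv_nonneg.2 hst.le)
        _ = f s / s := (div_eq_mul_inv _ _).symm
    have hlb := lower_bound f hf0 hfi α t C ht hkey
    refine le_trans ?_ hlb
    rw [rpow_int_eval α ht]
    have hid : t ^ α * t ^ (-α) = 1 := by
      rw [← Real.rpow_add ht]; simp
    have h2id : (2:ℝ) ^ α * (2:ℝ) ^ (-α) = 1 := by
      rw [← Real.rpow_add (by norm_num : (0:ℝ) < 2)]; simp
    have hC_eval : C * ((if α = 0 then Real.log 2 else (1 - (2:ℝ) ^ (-α)) / α) * t ^ (-α))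
        = f (2*t) * ((2:ℝ) ^ α * (if α = 0 then Real.log 2 else (1 - (2:ℝ) ^ (-α)) / α)) := by
      rw [hCdef, Real.mul_rpow (by norm_num : (0:ℝ) ≤ 2) ht.le]
      have e : (2:ℝ) ^ α * t ^ α * f (2*t)
            * ((if α = 0 then Real.log 2 else (1 - (2:ℝ) ^ (-α)) / α) * t ^ (-α))
          = (f (2*t) * ((2:ℝ) ^ α * (if α = 0 then Real.log 2 else (1 - (2:ℝ) ^ (-α)) / α)))
            * (t ^ α * t ^ (-α)) := by
        ring
      rw [e, hid, mul_one]
    rw [hC_eval]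
    by_cases hα : α = 0
    · rw [if_pos hα, cDec, if_pos hα, hα]
      rw [Real.rpow_zero]
      nlinarith [Real.log_two_gt_d9, hf0 (2*t) h2t]
    · rw [if_neg hα, cDec, if_neg hα]
      have e2 : (2:ℝ) ^ α * ((1 - (2:ℝ) ^ (-α)) / α) = ((2:ℝ) ^ α - 1) / α := by
        rw [mul_div_assoc'] 
        congr 1
        rw [mul_sub, mul_one, h2id]
      rw [e2, mul_comm]
end
end

section
/- For any measurable f on ℝ^n with f* finite, the function s ↦ s·[f**(s) − f*(s)] is non-decreasing on (0,∞); in fact s[f**(s) − f*(s)] = ∫_{f*(s)}^∞ λ_f(u) du, where λ_f(u) = |{x : |f(x)| > u}| is the distribution function of f. -/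
open MeasureTheory Filter Topology Set
open scoped ENNReal

noncomputable section

/-- The distribution function `λ_f(u) = |{x : |f(x)| > u}|`. -/
def distrib {n : ℕ} (f : En n → ℝ) (u : ℝ) : ℝ := (volume {x : En n | u < |f x|}).toReal

namespace SOscAux

variable {n : ℕ} {f : En n → ℝ}

/-- The distribution function as an `ℝ≥0∞`-valued function. -/
def lam (f : En n → ℝ) (u : ℝ) : ℝ≥0∞ := volume {x : En n | u < |f x|}

lemma lam_anti : Antitone (lam f) := fun u v huv =>
  measure_mono fun x hx => lt_of_le_of_lt huv hx

lemma lam_meas : Measurable (lam f) := (lam_anti (f := f)).measurable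

lemma rearr_nonneg (t : ℝ) : 0 ≤ rearr f t :=
  Real.sInf_nonneg fun _ hl => hl.1

variable (hfin : ∀ t > (0:ℝ), ∃ l : ℝ, 0 ≤ l ∧ volume {x : En n | l < |f x|} ≤ ENNReal.ofReal t)

include hfin

lemma rearr_antitoneOn : AntitoneOn (rearr f) (Set.Ioi 0) := by
  intro t₁ ht₁ t₂ _ h12
  refine csInf_le_csInf ⟨0, fun l hl => hl.1⟩ ?_ ?_
  · obtain ⟨l, hl⟩ := hfin t₁ ht₁; exact ⟨l, hl⟩
  · intro l hl; exact ⟨hl.1, hl.2.trans (ENNReal.ofReal_le_ofReal h12)⟩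

lemma lam_rearr_le {t : ℝ} (ht : 0 < t) : lam f (rearr f t) ≤ ENNReal.ofReal t := by
  set c := rearr f t with hc
  have hne : {l : ℝ | 0 ≤ l ∧ volume {x : En n | l < |f x|} ≤ ENNReal.ofReal t}.Nonempty :=
    hfin t ht
  have hstep : ∀ k : ℕ, lam f (c + 1/(k+1)) ≤ ENNReal.ofReal t := by
    intro k
    obtain ⟨l, hl, hlt⟩ := Real.lt_sInf_add_pos hne (by positivity : (0:ℝ) < 1/(k+1))
    exact (lam_anti hlt.le).trans hl.2
  have hmono : Monotone fun k : ℕ => {x : En n | c + 1/(k+1) < |f x|} := by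
    intro k₁ k₂ hk x hx
    have h1 : (0:ℝ) < (k₁:ℝ) + 1 := by positivity
    have h2 : ((k₁:ℝ) + 1) ≤ (k₂:ℝ) + 1 := by exact_mod_cast by omega
    have : (1:ℝ)/((k₂:ℝ)+1) ≤ 1/((k₁:ℝ)+1) := one_div_le_one_div_of_le h1 h2
    simp only [mem_setOf_eq] at hx ⊢
    linarith
  have hset : {x : En n | c < |f x|} = ⋃ k : ℕ, {x : En n | c + 1/(k+1) < |f x|} := by
    ext x
    simp only [mem_setOf_eq, mem_iUnion]
    constructor
    · intro hx
      obtain ⟨k, hk⟩ := exists_nat_one_div_lt (sub_pos.2 hx)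
      exact ⟨k, by linarith⟩
    · rintro ⟨k, hk⟩
      have : (0:ℝ) < 1/((k:ℝ)+1) := by positivity
      linarith
  calc lam f c = volume (⋃ k : ℕ, {x : En n | c + 1/(k+1) < |f x|}) := by
        rw [lam, hset]
    _ = ⨆ k : ℕ, lam f (c + 1/(k+1)) := hmono.directed_le.measure_iUnion
    _ ≤ ENNReal.ofReal t := iSup_le hstep

lemma rearr_le_iff {t v : ℝ} (ht : 0 < t) (hv : 0 ≤ v) :
    rearr f t ≤ v ↔ lam f v ≤ ENNReal.ofReal t := by
  constructor
  · intro h; exact (lam_anti h).trans (lam_rearr_le hfin ht)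
  · intro h; exact csInf_le ⟨0, fun l hl => hl.1⟩ ⟨hv, h⟩

lemma lt_rearr_iff {t v : ℝ} (ht : 0 < t) (hv : 0 ≤ v) :
    v < rearr f t ↔ ENNReal.ofReal t < lam f v := by
  rw [← not_le, ← not_le]
  exact not_congr (rearr_le_iff hfin ht hv)

variable (hint : ∀ t > (0:ℝ), IntervalIntegrable (rearr f) volume 0 t)

include hint

lemma main_eq {s : ℝ} (hs : 0 < s) :
    (∫⁻ u in Set.Ioi (rearr f s), lam f u) ≠ ∞ ∧
      s * (dstar f s - rearr f s) = (∫⁻ u in Set.Ioi (rearr f s), lam f u).toReal := by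
  set c := rearr f s with hcdef
  have hc0 : 0 ≤ c := rearr_nonneg s
  have hanti := rearr_antitoneOn hfin
  have hnn : ∀ t ∈ Ioo (0:ℝ) s, 0 ≤ rearr f t - c := fun t ht =>
    sub_nonneg.2 (hanti ht.1 hs ht.2.le)
  have hnn_ae : 0 ≤ᵐ[volume.restrict (Ioo (0:ℝ) s)] fun t => rearr f t - c :=
    (ae_restrict_iff' measurableSet_Ioo).2 (ae_of_all _ hnn)
  have hg : AEMeasurable (fun t => rearr f t - c) (volume.restrict (Ioo (0:ℝ) s)) :=
    (aemeasurable_restrict_of_antitoneOn measurableSet_Ioo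
      (hanti.mono Ioo_subset_Ioi_self)).sub aemeasurable_const
  -- Layer cake
  have hlc := lintegral_eq_lintegral_meas_lt (volume.restrict (Ioo (0:ℝ) s)) hnn_ae hg
  -- Inner measure computation
  have hinner : ∀ u ∈ Set.Ioi (0:ℝ),
      (volume.restrict (Ioo (0:ℝ) s)) {t : ℝ | u < rearr f t - c} = lam f (u + c) := by
    intro u hu
    have hu0 : (0:ℝ) < u := hu
    have hv0 : 0 ≤ u + c := by linarith
    have hvlam : lam f (u + c) ≤ ENNReal.ofReal s :=
      (rearr_le_iff hfin hs hv0).1 (by linarith)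
    have hfin' : lam f (u+c) ≠ ∞ := (hvlam.trans_lt ENNReal.ofReal_lt_top).ne
    set r := (lam f (u+c)).toReal with hrdef
    have hrofReal : ENNReal.ofReal r = lam f (u+c) := ENNReal.ofReal_toReal hfin'
    have hrs : r ≤ s := by
      have := ENNReal.toReal_mono ENNReal.ofReal_ne_top hvlam
      rwa [ENNReal.toReal_ofReal hs.le] at this
    rw [Measure.restrict_apply' measurableSet_Ioo]
    have hset : {t : ℝ | u < rearr f t - c} ∩ Ioo 0 s = Ioo 0 r := by
      ext t
      simp only [mem_inter_iff, mem_setOf_eq, mem_Ioo]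
      constructor
      · rintro ⟨h1, h2, h3⟩
        refine ⟨h2, ?_⟩
        have hlt : u + c < rearr f t := by linarith
        have := (lt_rearr_iff hfin h2 hv0).1 hlt
        rw [← hrofReal] at this
        exact (ENNReal.ofReal_lt_ofReal_iff_of_nonneg h2.le).1 this
      · rintro ⟨h1, h2⟩
        have hts : t < s := lt_of_lt_of_le h2 hrs
        refine ⟨?_, h1, hts⟩
        have hofr : ENNReal.ofReal t < lam f (u+c) := by
          rw [← hrofReal]
          exact (ENNReal.ofReal_lt_ofReal_iff_of_nonneg h1.le).2 h2
        have := (lt_rearr_iff hfin h1 hv0).2 hofr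
        linarith
    rw [hset, Real.volume_Ioo, sub_zero, hrofReal]
  have hcongr : ∫⁻ u in Set.Ioi (0:ℝ),
        (volume.restrict (Ioo (0:ℝ) s)) {t : ℝ | u < rearr f t - c}
      = ∫⁻ u in Set.Ioi (0:ℝ), lam f (u + c) :=
    setLIntegral_congr_fun measurableSet_Ioi hinner
  -- Translation
  have htrans : ∫⁻ u in Set.Ioi (0:ℝ), lam f (u + c) = ∫⁻ u in Set.Ioi c, lam f u := by
    have hmp : MeasurePreserving (fun u : ℝ => u + c) volume volume :=
      measurePreserving_add_right volume c
    have hemb : MeasurableEmbedding (fun u : ℝ => u + c) :=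
      (MeasurableEquiv.addRight c).measurableEmbedding
    have hpre : (fun u : ℝ => u + c) ⁻¹' (Set.Ioi c) = Set.Ioi 0 := by
      ext u; simp
    rw [← hpre]
    exact hmp.setLIntegral_comp_preimage_emb hemb _ _
  have hkey : ∫⁻ t in Ioo (0:ℝ) s, ENNReal.ofReal (rearr f t - c)
      = ∫⁻ u in Set.Ioi c, lam f u := by
    rw [hlc, hcongr, htrans]
  -- Finiteness
  have hIntOn : IntegrableOn (rearr f) (Ioc 0 s) := by
    have h := hint s hs
    rwa [intervalIntegrable_iff_integrableOn_Ioc_of_le hs.le] at h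
  have hfin2 : ∫⁻ t in Ioo (0:ℝ) s, ENNReal.ofReal (rearr f t - c) ≠ ∞ := by
    have h1 : ∫⁻ t in Ioo (0:ℝ) s, ENNReal.ofReal (rearr f t - c)
        ≤ ∫⁻ t in Ioc (0:ℝ) s, ENNReal.ofReal (rearr f t) := by
      refine le_trans (lintegral_mono fun t => ?_) (lintegral_mono_set Ioo_subset_Ioc_self)
      exact ENNReal.ofReal_le_ofReal (by linarith)
    exact (h1.trans_lt hIntOn.lintegral_lt_top).ne
  refine ⟨by rw [← hkey]; exact hfin2, ?_⟩
  -- real side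
  have hsub : ∫ t in (0:ℝ)..s, (rearr f t - c) = (∫ t in (0:ℝ)..s, rearr f t) - s * c := by
    rw [intervalIntegral.integral_sub (hint s hs) intervalIntegrable_const,
      intervalIntegral.integral_const]
    simp [smul_eq_mul]
  have hreal : s * (dstar f s - rearr f s) = ∫ t in Ioo (0:ℝ) s, (rearr f t - c) := by
    rw [← integral_Ioc_eq_integral_Ioo, ← intervalIntegral.integral_of_le hs.le, hsub, dstar]
    field_simp
    rfl
  rw [hreal, integral_eq_lintegral_of_nonneg_ae hnn_ae hg.aestronglyMeasurable, hkey]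

end SOscAux

open SOscAux

/-- For measurable `f` with `f*` finite, `s ↦ s[f**(s) − f*(s)]` is non-decreasing on
`(0,∞)`; in fact `s[f**(s) − f*(s)] = ∫_{f*(s)}^∞ λ_f(u) du`. -/
theorem s_osc_monotone {n : ℕ} (f : En n → ℝ) (hm : Measurable f)
    (hfin : ∀ t > (0:ℝ), ∃ l : ℝ, 0 ≤ l ∧ volume {x : En n | l < |f x|} ≤ ENNReal.ofReal t)
    (hint : ∀ t > (0:ℝ), IntervalIntegrable (rearr f) volume 0 t) :
    MonotoneOn (fun s => s * (dstar f s - rearr f s)) (Set.Ioi 0) ∧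
    ∀ s > (0:ℝ),
      s * (dstar f s - rearr f s) = ∫ u in Set.Ioi (rearr f s), distrib f u := by
  have key : ∀ {s : ℝ}, 0 < s →
      (∫⁻ u in Set.Ioi (rearr f s), lam f u) ≠ ∞ ∧
        s * (dstar f s - rearr f s) = (∫⁻ u in Set.Ioi (rearr f s), lam f u).toReal :=
    fun {s} hs => main_eq hfin hint hs
  constructor
  · intro s₁ h1 s₂ h2 h12
    simp only
    rw [(key h1).2, (key h2).2]
    refine ENNReal.toReal_mono (key h2).1 ?_
    refine lintegral_mono_set (Ioi_subset_Ioi ?_)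
    exact rearr_antitoneOn hfin h1 h2 h12
  · intro s hs
    rw [(key hs).2]
    have hmeas : AEMeasurable (lam f) (volume.restrict (Set.Ioi (rearr f s))) :=
      lam_meas.aemeasurable
    have hae : ∀ᵐ u ∂(volume.restrict (Set.Ioi (rearr f s))), lam f u < ∞ := by
      refine (ae_restrict_iff' measurableSet_Ioi).2 (ae_of_all _ fun u hu => ?_)
      exact lt_of_le_of_lt ((lam_anti (le_of_lt hu)).trans (lam_rearr_le hfin hs))
        ENNReal.ofReal_lt_top
    exact (integral_toReal hmeas hae).symm
end
end

section
/- For every f ∈ C_0^∞(ℝ^n), ∫_0^∞ s^{-1/n}[f**(s) − f*(s)] ds = (1 − 1/n) ∫_0^∞ f**(s) s^{1−1/n} ds/s = (1−1/n)‖f‖_{L^{n/(n-1),1}}; consequently the integrated oscillation inequality with X = L^1 yields the sharp Gagliardo–Nirenberg embedding W_0^{1,1}(ℝ^n) ⊂ L^{n/(n-1),1}(ℝ^n). -/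
open MeasureTheory Filter Topology Set
open scoped ENNReal

noncomputable section

namespace SGN

variable {n : ℕ} {f : En n → ℝ}

/-- distribution function -/
def mud (f : En n → ℝ) (t : ℝ) : ℝ≥0∞ := volume {x : En n | t < |f x|}

lemma mud_anti (f : En n → ℝ) : Antitone (mud f) := fun _ _ hst =>
  measure_mono fun _ hx => lt_of_le_of_lt hst hx

lemma mud_measSet (hcf : Continuous f) (t : ℝ) : MeasurableSet {x : En n | t < |f x|} :=
  measurableSet_lt measurable_const hcf.abs.measurable

lemma mud_ne_top (hsf : HasCompactSupport f) {t : ℝ} (ht : 0 < t) : mud f t ≠ ⊤ := by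
  have hsub : {x : En n | t < |f x|} ⊆ tsupport f := by
    intro x hx
    apply subset_tsupport
    simp only [Function.mem_support]
    intro h0
    rw [Set.mem_setOf_eq, h0, abs_zero] at hx
    exact absurd ht (not_lt.2 hx.le)
  exact ((measure_mono hsub).trans_lt hsf.measure_lt_top).ne

lemma exists_bd (hcf : Continuous f) (hsf : HasCompactSupport f) :
    ∃ M : ℝ, 0 ≤ M ∧ ∀ x, |f x| ≤ M := by
  obtain ⟨C, hC⟩ := hsf.exists_bound_of_continuous hcf
  exact ⟨max C 0, le_max_right _ _, fun x =>
    le_trans (by simpa [Real.norm_eq_abs] using hC x) (le_max_left _ _)⟩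

lemma mud_eq_zero {M : ℝ} (hb : ∀ x, |f x| ≤ M) : mud f M = 0 := by
  have : {x : En n | M < |f x|} = ∅ :=
    eq_empty_iff_forall_notMem.2 fun x hx => absurd (hb x) (not_le.2 hx)
  simp [mud, this]

lemma rset_nonempty (hcf : Continuous f) (hsf : HasCompactSupport f) (t : ℝ) :
    Set.Nonempty {l : ℝ | 0 ≤ l ∧ mud f l ≤ ENNReal.ofReal t} := by
  obtain ⟨M, hM0, hM⟩ := exists_bd hcf hsf
  exact ⟨M, hM0, by simp [mud_eq_zero hM]⟩

lemma rset_bdd (t : ℝ) : BddBelow {l : ℝ | 0 ≤ l ∧ mud f l ≤ ENNReal.ofReal t} :=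
  ⟨0, fun _ hl => hl.1⟩

lemma rearr_eq (t : ℝ) : rearr f t = sInf {l : ℝ | 0 ≤ l ∧ mud f l ≤ ENNReal.ofReal t} := rfl

lemma rearr_nonneg (hcf : Continuous f) (hsf : HasCompactSupport f) (t : ℝ) :
    0 ≤ rearr f t :=
  le_csInf (rset_nonempty hcf hsf t) fun _ hl => hl.1

lemma rearr_le_of_bound (hcf : Continuous f) (hsf : HasCompactSupport f) {M : ℝ}
    (hM0 : 0 ≤ M) (hb : ∀ x, |f x| ≤ M) (t : ℝ) : rearr f t ≤ M :=
  csInf_le (rset_bdd t) ⟨hM0, le_trans (le_of_eq (mud_eq_zero hb)) zero_le⟩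

lemma rearr_anti (hcf : Continuous f) (hsf : HasCompactSupport f) : Antitone (rearr f) := by
  intro u v huv
  exact csInf_le_csInf (rset_bdd _) (rset_nonempty hcf hsf _)
    (fun l hl => ⟨hl.1, hl.2.trans (ENNReal.ofReal_le_ofReal huv)⟩)

lemma rearr_measurable (hcf : Continuous f) (hsf : HasCompactSupport f) :
    Measurable (rearr f) :=
  (rearr_anti hcf hsf).measurable

lemma rearr_le_iff (hcf : Continuous f) (hsf : HasCompactSupport f) {t : ℝ} (ht : 0 ≤ t)
    (u : ℝ) : rearr f u ≤ t ↔ mud f t ≤ ENNReal.ofReal u := by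
  constructor
  · intro h
    have key : ∀ k : ℕ, mud f (t + 1 / (k + 1)) ≤ ENNReal.ofReal u := by
      intro k
      have hpos : (0:ℝ) < 1 / (k + 1) := by positivity
      have hlt : sInf {l : ℝ | 0 ≤ l ∧ mud f l ≤ ENNReal.ofReal u} < t + 1 / (k + 1) :=
        lt_of_le_of_lt h (by linarith)
      obtain ⟨l, hl, hlt'⟩ :=
        (csInf_lt_iff (rset_bdd u) (rset_nonempty hcf hsf u)).mp hlt
      exact le_trans (mud_anti f hlt'.le) hl.2
    have hU : {x : En n | t < |f x|} = ⋃ k : ℕ, {x : En n | t + 1 / (k + 1) < |f x|} := by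
      ext x
      simp only [Set.mem_setOf_eq, Set.mem_iUnion]
      constructor
      · intro hx
        obtain ⟨k, hk⟩ := exists_nat_one_div_lt (sub_pos.2 hx)
        exact ⟨k, by linarith⟩
      · rintro ⟨k, hk⟩
        have : (0:ℝ) < 1 / (k + 1) := by positivity
        linarith
    have hmono : Monotone fun k : ℕ => {x : En n | t + 1 / (k + 1) < |f x|} := by
      intro k j hkj x hx
      simp only [Set.mem_setOf_eq] at hx ⊢
      have h1 : (1:ℝ) / (j + 1) ≤ 1 / (k + 1) := by
        apply one_div_le_one_div_of_le (by positivity)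
        exact_mod_cast by omega
      linarith
    calc mud f t = ⨆ k : ℕ, mud f (t + 1 / (k + 1)) := by
          rw [mud, hU, hmono.directed_le.measure_iUnion]; rfl
      _ ≤ ENNReal.ofReal u := iSup_le key
  · intro h
    exact csInf_le (rset_bdd u) ⟨ht, h⟩

lemma rearr_eq_zero (hcf : Continuous f) (hsf : HasCompactSupport f) {u : ℝ}
    (hu : (volume (tsupport f)).toReal ≤ u) : rearr f u = 0 := by
  refine le_antisymm ?_ (rearr_nonneg hcf hsf u)
  rw [rearr_le_iff hcf hsf le_rfl u]
  have h1 : mud f 0 ≤ volume (tsupport f) := by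
    apply measure_mono
    intro x hx
    apply subset_tsupport
    simp only [Function.mem_support]
    intro h0
    rw [Set.mem_setOf_eq, h0, abs_zero] at hx
    exact lt_irrefl _ hx
  calc mud f 0 ≤ volume (tsupport f) := h1
    _ = ENNReal.ofReal (volume (tsupport f)).toReal :=
        (ENNReal.ofReal_toReal hsf.measure_lt_top.ne).symm
    _ ≤ ENNReal.ofReal u := ENNReal.ofReal_le_ofReal hu

/-- `∫⁻ u in Ioo 0 m, u^r = m^(r+1)/(r+1)` for `r > -1`, `m ≥ 0`. -/
lemma lint_Ioo_rpow {r : ℝ} (hr : -1 < r) {m : ℝ} (hm : 0 ≤ m) :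
    ∫⁻ u in Ioo (0:ℝ) m, ENNReal.ofReal (u ^ r) =
      ENNReal.ofReal (m ^ (r + 1) / (r + 1)) := by
  have hint : IntegrableOn (fun u : ℝ => u ^ r) (Ioo 0 m) := by
    rw [← intervalIntegrable_iff_integrableOn_Ioo_of_le hm]
    exact intervalIntegral.intervalIntegrable_rpow' hr
  rw [← ofReal_integral_eq_lintegral_ofReal hint]
  · congr 1
    rw [← MeasureTheory.integral_Ioc_eq_integral_Ioo,
      ← intervalIntegral.integral_of_le hm, integral_rpow (Or.inl hr)]
    rw [Real.zero_rpow (by linarith)]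
    ring
  · filter_upwards [self_mem_ae_restrict measurableSet_Ioo] with u hu
    exact Real.rpow_nonneg hu.1.le r

/-- `∫⁻ s in Ioi u, s^r = -u^(r+1)/(r+1)` for `r < -1`, `u > 0`. -/
lemma lint_Ioi_rpow {r : ℝ} (hr : r < -1) {u : ℝ} (hu : 0 < u) :
    ∫⁻ s in Ioi u, ENNReal.ofReal (s ^ r) =
      ENNReal.ofReal (-u ^ (r + 1) / (r + 1)) := by
  rw [← ofReal_integral_eq_lintegral_ofReal (integrableOn_Ioi_rpow_of_lt hr hu)]
  · rw [integral_Ioi_rpow_of_lt hr hu]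
  · filter_upwards [self_mem_ae_restrict measurableSet_Ioi] with s hs
    exact Real.rpow_nonneg (hu.trans hs).le r


lemma dstar_nonneg (hcf : Continuous f) (hsf : HasCompactSupport f) {s : ℝ} (hs : 0 < s) :
    0 ≤ dstar f s := by
  unfold dstar
  exact mul_nonneg (by positivity)
    (intervalIntegral.integral_nonneg hs.le fun u _ => rearr_nonneg hcf hsf u)

lemma dstar_measurable (hcf : Continuous f) (hsf : HasCompactSupport f) :
    Measurable (dstar f) := by
  have hcont : Continuous fun t => ∫ s in (0:ℝ)..t, rearr f s :=
    intervalIntegral.continuous_primitive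
      (fun a b => (rearr_anti hcf hsf).intervalIntegrable) 0
  exact (measurable_const.div measurable_id).mul hcont.measurable

lemma lint_Ioo_rearr_lt_top (hcf : Continuous f) (hsf : HasCompactSupport f) (s : ℝ) :
    ∫⁻ u in Ioo (0:ℝ) s, ENNReal.ofReal (rearr f u) ≠ ⊤ := by
  obtain ⟨M, hM0, hM⟩ := exists_bd hcf hsf
  have hle : ∫⁻ u in Ioo (0:ℝ) s, ENNReal.ofReal (rearr f u)
      ≤ ∫⁻ _ in Ioo (0:ℝ) s, ENNReal.ofReal M :=
    lintegral_mono fun u => ENNReal.ofReal_le_ofReal (rearr_le_of_bound hcf hsf hM0 hM u)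
  refine (hle.trans_lt ?_).ne
  rw [setLIntegral_const, Real.volume_Ioo]
  exact ENNReal.mul_lt_top ENNReal.ofReal_lt_top ENNReal.ofReal_lt_top

lemma dstar_ofReal (hcf : Continuous f) (hsf : HasCompactSupport f) {s : ℝ} (hs : 0 < s) :
    ENNReal.ofReal (dstar f s) =
      ENNReal.ofReal (1 / s) * ∫⁻ u in Ioo (0:ℝ) s, ENNReal.ofReal (rearr f u) := by
  have h1 : ∫ s' in (0:ℝ)..s, rearr f s' = ∫ u in Ioo (0:ℝ) s, rearr f u := by
    rw [intervalIntegral.integral_of_le hs.le, MeasureTheory.integral_Ioc_eq_integral_Ioo]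
  have h2 : ∫ u in Ioo (0:ℝ) s, rearr f u
      = (∫⁻ u in Ioo (0:ℝ) s, ENNReal.ofReal (rearr f u)).toReal := by
    rw [integral_eq_lintegral_of_nonneg_ae (ae_of_all _ fun u => rearr_nonneg hcf hsf u)
      (rearr_measurable hcf hsf).aestronglyMeasurable]
  rw [dstar, h1, h2, ENNReal.ofReal_mul (by positivity),
    ENNReal.ofReal_toReal (lint_Ioo_rearr_lt_top hcf hsf s)]

lemma I2_eq_I1 (hn : 1 < n) (hcf : Continuous f) (hsf : HasCompactSupport f) :
    ∫⁻ s in Ioi (0:ℝ), ENNReal.ofReal (s ^ (-(1:ℝ)/n)) * ENNReal.ofReal (dstar f s)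
      = (n : ℝ≥0∞) *
        ∫⁻ u in Ioi (0:ℝ), ENNReal.ofReal (u ^ (-(1:ℝ)/n)) * ENNReal.ofReal (rearr f u) := by
  have hn1 : (1:ℝ) < n := by exact_mod_cast hn
  have hnpos : (0:ℝ) < n := by linarith
  set e : ℝ := -(1:ℝ)/n with he
  have he0 : e < 0 := by
    rw [he, neg_div]
    have : (0:ℝ) < 1 / n := by positivity
    linarith
  set er : ℝ := e + (-1) with her
  have herlt : er < -1 := by rw [her]; linarith
  set F : ℝ → ℝ → ℝ≥0∞ := fun s u =>
    ENNReal.ofReal (s ^ er) * ENNReal.ofReal (rearr f u) *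
      Set.indicator {p : ℝ × ℝ | p.2 < p.1} (fun _ => 1) (s, u) with hF
  have hFm : Measurable (Function.uncurry F) := by
    have huncurry : Function.uncurry F = fun p : ℝ × ℝ =>
        ENNReal.ofReal (p.1 ^ er) * ENNReal.ofReal (rearr f p.2) *
          Set.indicator {p : ℝ × ℝ | p.2 < p.1} (fun _ => 1) p := by
      ext ⟨s, u⟩; rfl
    rw [huncurry]
    exact (((measurable_fst.pow measurable_const).ennreal_ofReal).mul
        (((rearr_measurable hcf hsf).comp measurable_snd).ennreal_ofReal)).mul
      (measurable_one.indicator (measurableSet_lt measurable_snd measurable_fst))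
  have step1 : ∀ s ∈ Ioi (0:ℝ),
      ENNReal.ofReal (s ^ e) * ENNReal.ofReal (dstar f s) = ∫⁻ u in Ioi (0:ℝ), F s u := by
    intro s hs
    have hs' : (0:ℝ) < s := hs
    have hind : ∀ u : ℝ, F s u = Set.indicator (Iio s)
        (fun u => ENNReal.ofReal (s ^ er) * ENNReal.ofReal (rearr f u)) u := by
      intro u
      by_cases h : u < s
      · rw [Set.indicator_of_mem (show u ∈ Iio s from h), hF]
        simp only
        rw [Set.indicator_of_mem (show ((s,u) : ℝ × ℝ) ∈ {p : ℝ × ℝ | p.2 < p.1} from h),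
          mul_one]
      · rw [Set.indicator_of_notMem (show u ∉ Iio s from h), hF]
        simp only
        rw [Set.indicator_of_notMem (show ((s,u) : ℝ × ℝ) ∉ {p : ℝ × ℝ | p.2 < p.1} from h),
          mul_zero]
    have hset : Iio s ∩ Ioi (0:ℝ) = Ioo 0 s := by
      ext u
      exact ⟨fun ⟨h1, h2⟩ => ⟨h2, h1⟩, fun ⟨h1, h2⟩ => ⟨h2, h1⟩⟩
    have hexp : s ^ e * (1 / s) = s ^ er := by
      rw [her, Real.rpow_add hs', Real.rpow_neg_one, one_div]
    rw [dstar_ofReal hcf hsf hs', ← mul_assoc,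
      ← ENNReal.ofReal_mul (Real.rpow_nonneg hs'.le e), hexp,
      lintegral_congr fun u => hind u, lintegral_indicator measurableSet_Iio,
      Measure.restrict_restrict measurableSet_Iio, hset,
      lintegral_const_mul _ ((rearr_measurable hcf hsf).ennreal_ofReal)]
  have hval : ∀ u : ℝ, 0 < u →
      (∫⁻ s in Ioi u, ENNReal.ofReal (s ^ er)) = ENNReal.ofReal ((n:ℝ) * u ^ e) := by
    intro u hu
    rw [lint_Ioi_rpow herlt hu]
    congr 1
    have h1 : er + 1 = e := by rw [her]; ring
    rw [h1, he]
    have hne : (n:ℝ) ≠ 0 := hnpos.ne'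
    field_simp
  have step2 : ∀ u ∈ Ioi (0:ℝ),
      (∫⁻ s in Ioi (0:ℝ), F s u) =
        (n : ℝ≥0∞) * (ENNReal.ofReal (u ^ e) * ENNReal.ofReal (rearr f u)) := by
    intro u hu
    have hu' : (0:ℝ) < u := hu
    have hind : ∀ s : ℝ, F s u =
        Set.indicator (Ioi u) (fun s => ENNReal.ofReal (s ^ er)) s *
          ENNReal.ofReal (rearr f u) := by
      intro s
      by_cases h : u < s
      · rw [Set.indicator_of_mem (show s ∈ Ioi u from h), hF]
        simp only
        rw [Set.indicator_of_mem (show ((s,u) : ℝ × ℝ) ∈ {p : ℝ × ℝ | p.2 < p.1} from h),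
          mul_one]
      · rw [Set.indicator_of_notMem (show s ∉ Ioi u from h), hF]
        simp only
        rw [Set.indicator_of_notMem (show ((s,u) : ℝ × ℝ) ∉ {p : ℝ × ℝ | p.2 < p.1} from h),
          mul_zero, zero_mul]
    rw [lintegral_congr fun s => hind s,
      lintegral_mul_const _ ((measurable_id'.pow measurable_const).ennreal_ofReal.indicator
        measurableSet_Ioi),
      lintegral_indicator measurableSet_Ioi,
      Measure.restrict_restrict measurableSet_Ioi,
      Set.inter_eq_self_of_subset_left (Ioi_subset_Ioi hu'.le),
      hval u hu', ENNReal.ofReal_mul hnpos.le, ENNReal.ofReal_natCast, mul_assoc]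
  calc ∫⁻ s in Ioi (0:ℝ), ENNReal.ofReal (s ^ e) * ENNReal.ofReal (dstar f s)
      = ∫⁻ s in Ioi (0:ℝ), ∫⁻ u in Ioi (0:ℝ), F s u :=
        setLIntegral_congr_fun measurableSet_Ioi step1
    _ = ∫⁻ u in Ioi (0:ℝ), ∫⁻ s in Ioi (0:ℝ), F s u :=
        lintegral_lintegral_swap hFm.aemeasurable
    _ = ∫⁻ u in Ioi (0:ℝ), (n : ℝ≥0∞) *
          (ENNReal.ofReal (u ^ e) * ENNReal.ofReal (rearr f u)) :=
        setLIntegral_congr_fun measurableSet_Ioi step2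
    _ = (n:ℝ≥0∞) * ∫⁻ u in Ioi (0:ℝ),
          ENNReal.ofReal (u ^ e) * ENNReal.ofReal (rearr f u) :=
        lintegral_const_mul _ (((measurable_id'.pow measurable_const).ennreal_ofReal).mul
          ((rearr_measurable hcf hsf).ennreal_ofReal))

lemma I1_lt_top (hn : 1 < n) (hcf : Continuous f) (hsf : HasCompactSupport f) :
    ∫⁻ u in Ioi (0:ℝ), ENNReal.ofReal (u ^ (-(1:ℝ)/n)) * ENNReal.ofReal (rearr f u) < ⊤ := by
  have hn1 : (1:ℝ) < n := by exact_mod_cast hn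
  have hnpos : (0:ℝ) < n := by linarith
  have hegt : -1 < -(1:ℝ)/n := by
    rw [neg_div]
    apply neg_lt_neg
    rw [div_lt_one hnpos]
    exact hn1
  obtain ⟨M, hM0, hM⟩ := exists_bd hcf hsf
  set V := (volume (tsupport f)).toReal with hV
  have hV0 : (0:ℝ) ≤ V := ENNReal.toReal_nonneg
  have hbound : ∀ u ∈ Ioi (0:ℝ),
      ENNReal.ofReal (u ^ (-(1:ℝ)/n)) * ENNReal.ofReal (rearr f u)
        ≤ Set.indicator (Ioo 0 V)
            (fun u => ENNReal.ofReal (u ^ (-(1:ℝ)/n)) * ENNReal.ofReal M) u := by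
    intro u hu
    by_cases h : u < V
    · rw [Set.indicator_of_mem (show u ∈ Ioo (0:ℝ) V from ⟨hu, h⟩)]
      exact mul_le_mul_right (ENNReal.ofReal_le_ofReal (rearr_le_of_bound hcf hsf hM0 hM u)) _
    · rw [Set.indicator_of_notMem (fun hmem => h hmem.2),
        rearr_eq_zero hcf hsf (not_lt.1 h)]
      simp
  calc ∫⁻ u in Ioi (0:ℝ), ENNReal.ofReal (u ^ (-(1:ℝ)/n)) * ENNReal.ofReal (rearr f u)
      ≤ ∫⁻ u in Ioi (0:ℝ), Set.indicator (Ioo 0 V)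
          (fun u => ENNReal.ofReal (u ^ (-(1:ℝ)/n)) * ENNReal.ofReal M) u :=
        setLIntegral_mono (((measurable_id'.pow measurable_const).ennreal_ofReal.mul_const
          _).indicator measurableSet_Ioo) hbound
    _ ≤ ∫⁻ u, Set.indicator (Ioo 0 V)
          (fun u => ENNReal.ofReal (u ^ (-(1:ℝ)/n)) * ENNReal.ofReal M) u :=
        setLIntegral_le_lintegral _ _
    _ = ∫⁻ u in Ioo (0:ℝ) V, ENNReal.ofReal (u ^ (-(1:ℝ)/n)) * ENNReal.ofReal M :=
        lintegral_indicator measurableSet_Ioo _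
    _ = (∫⁻ u in Ioo (0:ℝ) V, ENNReal.ofReal (u ^ (-(1:ℝ)/n))) * ENNReal.ofReal M :=
        lintegral_mul_const _ ((measurable_id'.pow measurable_const).ennreal_ofReal)
    _ < ⊤ := by
        rw [lint_Ioo_rpow hegt hV0]
        exact ENNReal.mul_lt_top ENNReal.ofReal_lt_top ENNReal.ofReal_lt_top

lemma part1 (hn : 1 < n) (hcf : Continuous f) (hsf : HasCompactSupport f) :
    (∫ s in Set.Ioi (0:ℝ), s ^ (-(1:ℝ) / n) * (dstar f s - rearr f s)) =
      (1 - 1 / (n:ℝ)) * ∫ s in Set.Ioi (0:ℝ), dstar f s * s ^ ((1:ℝ) - 1 / n) / s := by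
  have hn1 : (1:ℝ) < n := by exact_mod_cast hn
  have hnpos : (0:ℝ) < n := by linarith
  set I1 := ∫⁻ u in Ioi (0:ℝ), ENNReal.ofReal (u ^ (-(1:ℝ)/n)) * ENNReal.ofReal (rearr f u)
    with hI1def
  set I2 := ∫⁻ s in Ioi (0:ℝ), ENNReal.ofReal (s ^ (-(1:ℝ)/n)) * ENNReal.ofReal (dstar f s)
    with hI2def
  have hI1lt : I1 < ⊤ := I1_lt_top hn hcf hsf
  have hI2eq : I2 = (n : ℝ≥0∞) * I1 := I2_eq_I1 hn hcf hsf
  have hI2lt : I2 < ⊤ := by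
    rw [hI2eq]
    exact ENNReal.mul_lt_top (ENNReal.natCast_lt_top n) hI1lt
  have hmA : Measurable fun s : ℝ => s ^ (-(1:ℝ)/n) * dstar f s :=
    (measurable_id'.pow measurable_const).mul (dstar_measurable hcf hsf)
  have hmB : Measurable fun s : ℝ => s ^ (-(1:ℝ)/n) * rearr f s :=
    (measurable_id'.pow measurable_const).mul (rearr_measurable hcf hsf)
  have hA0 : 0 ≤ᵐ[volume.restrict (Ioi (0:ℝ))] fun s : ℝ => s ^ (-(1:ℝ)/n) * dstar f s := by
    filter_upwards [self_mem_ae_restrict measurableSet_Ioi] with s hs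
    exact mul_nonneg (Real.rpow_nonneg (le_of_lt hs) _) (dstar_nonneg hcf hsf hs)
  have hB0 : 0 ≤ᵐ[volume.restrict (Ioi (0:ℝ))] fun s : ℝ => s ^ (-(1:ℝ)/n) * rearr f s := by
    filter_upwards [self_mem_ae_restrict measurableSet_Ioi] with s hs
    exact mul_nonneg (Real.rpow_nonneg (le_of_lt hs) _) (rearr_nonneg hcf hsf s)
  have hAof : ∫⁻ s in Ioi (0:ℝ), ENNReal.ofReal (s ^ (-(1:ℝ)/n) * dstar f s) = I2 := by
    rw [hI2def]
    apply lintegral_congr_ae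
    filter_upwards [self_mem_ae_restrict measurableSet_Ioi] with s hs
    rw [ENNReal.ofReal_mul (Real.rpow_nonneg (le_of_lt hs) _)]
  have hBof : ∫⁻ s in Ioi (0:ℝ), ENNReal.ofReal (s ^ (-(1:ℝ)/n) * rearr f s) = I1 := by
    rw [hI1def]
    apply lintegral_congr_ae
    filter_upwards [self_mem_ae_restrict measurableSet_Ioi] with s hs
    rw [ENNReal.ofReal_mul (Real.rpow_nonneg (le_of_lt hs) _)]
  have hAeq : ∫ s in Ioi (0:ℝ), s ^ (-(1:ℝ)/n) * dstar f s = I2.toReal := by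
    rw [integral_eq_lintegral_of_nonneg_ae hA0 hmA.aestronglyMeasurable, hAof]
  have hBeq : ∫ s in Ioi (0:ℝ), s ^ (-(1:ℝ)/n) * rearr f s = I1.toReal := by
    rw [integral_eq_lintegral_of_nonneg_ae hB0 hmB.aestronglyMeasurable, hBof]
  have hAint : IntegrableOn (fun s : ℝ => s ^ (-(1:ℝ)/n) * dstar f s) (Ioi 0) :=
    ⟨hmA.aestronglyMeasurable, by
      rw [hasFiniteIntegral_iff_ofReal hA0, hAof]; exact hI2lt⟩
  have hBint : IntegrableOn (fun s : ℝ => s ^ (-(1:ℝ)/n) * rearr f s) (Ioi 0) :=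
    ⟨hmB.aestronglyMeasurable, by
      rw [hasFiniteIntegral_iff_ofReal hB0, hBof]; exact hI1lt⟩
  have hLHS : (∫ s in Set.Ioi (0:ℝ), s ^ (-(1:ℝ) / n) * (dstar f s - rearr f s))
      = I2.toReal - I1.toReal := by
    rw [MeasureTheory.setIntegral_congr_fun measurableSet_Ioi
      (fun s _ => mul_sub (s ^ (-(1:ℝ)/n)) (dstar f s) (rearr f s)),
      integral_sub hAint hBint, hAeq, hBeq]
  have hRHS : (∫ s in Set.Ioi (0:ℝ), dstar f s * s ^ ((1:ℝ) - 1 / n) / s) = I2.toReal := by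
    rw [← hAeq]
    apply MeasureTheory.setIntegral_congr_fun measurableSet_Ioi
    intro s hs
    have hs' : (0:ℝ) < s := hs
    have h1 : s ^ ((1:ℝ) - 1/n) = s * s ^ (-(1:ℝ)/n) := by
      rw [show (1:ℝ) - 1/n = 1 + (-(1:ℝ)/n) by ring, Real.rpow_add hs', Real.rpow_one]
    show dstar f s * s ^ ((1:ℝ) - 1/n) / s = s ^ (-(1:ℝ)/n) * dstar f s
    rw [h1, mul_comm s (s ^ (-(1:ℝ)/n)), ← mul_assoc, mul_div_assoc,
      div_self hs'.ne', mul_one, mul_comm]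
  rw [hLHS, hRHS]
  have hI2r : I2.toReal = (n:ℝ) * I1.toReal := by
    rw [hI2eq, ENNReal.toReal_mul, ENNReal.toReal_natCast]
  rw [hI2r]
  field_simp

lemma level_set_eq (hcf : Continuous f) (hsf : HasCompactSupport f) {t : ℝ} (ht : 0 < t) :
    {u : ℝ | t < rearr f u} ∩ Ioi 0 = Ioo 0 (mud f t).toReal := by
  ext u
  simp only [Set.mem_inter_iff, Set.mem_setOf_eq, Set.mem_Ioi, Set.mem_Ioo]
  constructor
  · rintro ⟨h1, h2⟩
    refine ⟨h2, ?_⟩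
    by_contra hcon
    have hle : mud f t ≤ ENNReal.ofReal u := by
      rw [← ENNReal.ofReal_toReal (mud_ne_top hsf ht)]
      exact ENNReal.ofReal_le_ofReal (not_lt.1 hcon)
    exact absurd ((rearr_le_iff hcf hsf ht.le u).2 hle) (not_le.2 h1)
  · rintro ⟨h1, h2⟩
    refine ⟨?_, h1⟩
    by_contra hcon
    have h3 := (rearr_le_iff hcf hsf ht.le u).1 (not_lt.1 hcon)
    have h4 : (mud f t).toReal ≤ u := by
      have := (ENNReal.toReal_le_toReal (mud_ne_top hsf ht) ENNReal.ofReal_ne_top).2 h3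
      rwa [ENNReal.toReal_ofReal h1.le] at this
    linarith

lemma I1_layercake (hn : 1 < n) (hcf : Continuous f) (hsf : HasCompactSupport f) :
    ∫⁻ u in Ioi (0:ℝ), ENNReal.ofReal (u ^ (-(1:ℝ)/n)) * ENNReal.ofReal (rearr f u)
      = ENNReal.ofReal ((1 - 1/(n:ℝ))⁻¹) *
        ∫⁻ t in Ioi (0:ℝ), (mud f t) ^ ((1:ℝ) - 1/(n:ℝ)) := by
  have hn1 : (1:ℝ) < n := by exact_mod_cast hn
  have hnpos : (0:ℝ) < n := by linarith
  have hegt : -1 < -(1:ℝ)/n := by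
    rw [neg_div]
    apply neg_lt_neg
    rw [div_lt_one hnpos]
    exact hn1
  set q : ℝ := 1 - 1/(n:ℝ) with hq
  have hq0 : 0 < q := by
    rw [hq]
    have : 1/(n:ℝ) < 1 := by rw [div_lt_one hnpos]; exact hn1
    linarith
  set w : ℝ → ℝ≥0∞ := fun u => ENNReal.ofReal (u ^ (-(1:ℝ)/n)) with hw
  have hwm : Measurable w := (measurable_id'.pow measurable_const).ennreal_ofReal
  set ν := (volume.restrict (Ioi (0:ℝ))).withDensity w with hν
  have hL := lintegral_eq_lintegral_meas_lt ν
    (ae_of_all _ fun u => rearr_nonneg hcf hsf u) (rearr_measurable hcf hsf).aemeasurable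
  have hLHS : ∫⁻ u, ENNReal.ofReal (rearr f u) ∂ν
      = ∫⁻ u in Ioi (0:ℝ), w u * ENNReal.ofReal (rearr f u) := by
    rw [hν, lintegral_withDensity_eq_lintegral_mul _ hwm
      ((rearr_measurable hcf hsf).ennreal_ofReal)]
    rfl
  have hmeasset : ∀ t : ℝ, MeasurableSet {a : ℝ | t < rearr f a} := fun t =>
    measurableSet_lt measurable_const (rearr_measurable hcf hsf)
  have hRHS : ∫⁻ t in Ioi (0:ℝ), ν {a | t < rearr f a}
      = ∫⁻ t in Ioi (0:ℝ), ENNReal.ofReal q⁻¹ * (mud f t) ^ q := by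
    apply setLIntegral_congr_fun measurableSet_Ioi
    intro t ht
    beta_reduce
    rw [hν, withDensity_apply _ (hmeasset t), Measure.restrict_restrict (hmeasset t),
      level_set_eq hcf hsf ht]
    rw [show (∫⁻ u in Ioo (0:ℝ) (mud f t).toReal, w u)
        = ∫⁻ u in Ioo (0:ℝ) (mud f t).toReal, ENNReal.ofReal (u ^ (-(1:ℝ)/n)) from rfl]
    rw [lint_Ioo_rpow hegt ENNReal.toReal_nonneg]
    have hexp : -(1:ℝ)/n + 1 = q := by rw [hq]; ring
    rw [hexp, div_eq_mul_inv, mul_comm, ENNReal.ofReal_mul (by positivity)]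
    congr 1
    rw [ENNReal.toReal_rpow, ENNReal.ofReal_toReal]
    exact ENNReal.rpow_ne_top_of_nonneg hq0.le (mud_ne_top hsf ht)
  calc ∫⁻ u in Ioi (0:ℝ), ENNReal.ofReal (u ^ (-(1:ℝ)/n)) * ENNReal.ofReal (rearr f u)
      = ∫⁻ u, ENNReal.ofReal (rearr f u) ∂ν := hLHS.symm
    _ = ∫⁻ t in Ioi (0:ℝ), ν {a | t < rearr f a} := hL
    _ = ∫⁻ t in Ioi (0:ℝ), ENNReal.ofReal q⁻¹ * (mud f t) ^ q := hRHS
    _ = ENNReal.ofReal q⁻¹ * ∫⁻ t in Ioi (0:ℝ), (mud f t) ^ q :=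
        lintegral_const_mul _ ((mud_anti f).measurable.pow measurable_const)

lemma psi_deriv_zero : ∀ y : ℝ, y ≤ 0 ∨ 1 ≤ y → deriv Real.smoothTransition y = 0 := by
  have hcd : Continuous (deriv Real.smoothTransition) :=
    (Real.smoothTransition.contDiff (n := 1)).continuous_deriv le_rfl
  have h1 : ∀ y : ℝ, y < 0 → deriv Real.smoothTransition y = 0 := by
    intro y hy
    have hev : Real.smoothTransition =ᶠ[𝓝 y] fun _ => 0 := by
      filter_upwards [Iio_mem_nhds hy] with z hz
      exact Real.smoothTransition.zero_of_nonpos (le_of_lt hz)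
    rw [hev.deriv_eq, deriv_const]
  have h2 : ∀ y : ℝ, 1 < y → deriv Real.smoothTransition y = 0 := by
    intro y hy
    have hev : Real.smoothTransition =ᶠ[𝓝 y] fun _ => 1 := by
      filter_upwards [Ioi_mem_nhds hy] with z hz
      exact Real.smoothTransition.one_of_one_le (le_of_lt hz)
    rw [hev.deriv_eq, deriv_const]
  rintro y (hy | hy)
  · rcases hy.lt_or_eq with hy' | rfl
    · exact h1 y hy'
    · have ht1 : Tendsto (deriv Real.smoothTransition) (𝓝[<] (0:ℝ))
          (𝓝 (deriv Real.smoothTransition 0)) :=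
        (hcd.tendsto 0).mono_left nhdsWithin_le_nhds
      have ht2 : Tendsto (deriv Real.smoothTransition) (𝓝[<] (0:ℝ)) (𝓝 0) := by
        apply Tendsto.congr' _ tendsto_const_nhds
        filter_upwards [self_mem_nhdsWithin] with z hz
        exact (h1 z hz).symm
      exact tendsto_nhds_unique ht1 ht2
  · rcases hy.lt_or_eq with hy' | rfl
    · exact h2 y hy'
    · have ht1 : Tendsto (deriv Real.smoothTransition) (𝓝[>] (1:ℝ))
          (𝓝 (deriv Real.smoothTransition 1)) :=
        (hcd.tendsto 1).mono_left nhdsWithin_le_nhds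
      have ht2 : Tendsto (deriv Real.smoothTransition) (𝓝[>] (1:ℝ)) (𝓝 0) := by
        apply Tendsto.congr' _ tendsto_const_nhds
        filter_upwards [self_mem_nhdsWithin] with z hz
        exact (h2 z hz).symm
      exact tendsto_nhds_unique ht1 ht2

lemma psi_bound : ∃ κ : ℝ, 0 ≤ κ ∧ ∀ y : ℝ, |deriv Real.smoothTransition y| ≤ κ := by
  obtain ⟨C, hC⟩ := (isCompact_Icc (a := (0:ℝ)) (b := 1)).exists_bound_of_continuousOn
    ((Real.smoothTransition.contDiff (n := 1)).continuous_deriv le_rfl).continuousOn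
  refine ⟨max C 0, le_max_right _ _, fun y => ?_⟩
  by_cases hy : y ∈ Icc (0:ℝ) 1
  · exact le_trans (by simpa [Real.norm_eq_abs] using hC y hy) (le_max_left _ _)
  · simp only [Set.mem_Icc, not_and_or, not_le] at hy
    rw [psi_deriv_zero y (by rcases hy with h | h; exacts [Or.inl h.le, Or.inr h.le])]
    simp

def phi (a b x : ℝ) : ℝ :=
  (b - a) * (Real.smoothTransition ((x - a)/(b - a)) -
    Real.smoothTransition ((-x - a)/(b - a)))

lemma phi_contDiff {a b : ℝ} : ContDiff ℝ 1 (phi a b) := by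
  apply ContDiff.mul contDiff_const
  exact ((Real.smoothTransition.contDiff (n := 1)).comp
      ((contDiff_id.sub contDiff_const).div_const _)).sub
    ((Real.smoothTransition.contDiff (n := 1)).comp
      (((contDiff_id.neg).sub contDiff_const).div_const _))

lemma phi_zero_of_abs_le {a b x : ℝ} (ha : 0 ≤ a) (hab : a < b) (hx : |x| ≤ a) :
    phi a b x = 0 := by
  have hba : 0 < b - a := sub_pos.2 hab
  obtain ⟨h1, h2⟩ := abs_le.1 hx
  have e1 : Real.smoothTransition ((x - a)/(b-a)) = 0 :=
    Real.smoothTransition.zero_of_nonpos (div_nonpos_iff.mpr (Or.inr ⟨by linarith, hba.le⟩))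
  have e2 : Real.smoothTransition ((-x - a)/(b-a)) = 0 :=
    Real.smoothTransition.zero_of_nonpos (div_nonpos_iff.mpr (Or.inr ⟨by linarith, hba.le⟩))
  rw [phi, e1, e2]
  ring

lemma phi_abs_of_ge {a b x : ℝ} (ha : 0 ≤ a) (hab : a < b) (hx : b ≤ |x|) :
    |phi a b x| = b - a := by
  have hba : 0 < b - a := sub_pos.2 hab
  rcases le_abs.1 hx with h | h
  · have e1 : Real.smoothTransition ((x - a)/(b-a)) = 1 :=
      Real.smoothTransition.one_of_one_le ((one_le_div hba).2 (by linarith))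
    have e2 : Real.smoothTransition ((-x - a)/(b-a)) = 0 :=
      Real.smoothTransition.zero_of_nonpos (div_nonpos_iff.mpr (Or.inr ⟨by linarith, hba.le⟩))
    rw [phi, e1, e2, sub_zero, mul_one, abs_of_pos hba]
  · have e1 : Real.smoothTransition ((x - a)/(b-a)) = 0 :=
      Real.smoothTransition.zero_of_nonpos (div_nonpos_iff.mpr (Or.inr ⟨by linarith, hba.le⟩))
    have e2 : Real.smoothTransition ((-x - a)/(b-a)) = 1 :=
      Real.smoothTransition.one_of_one_le ((one_le_div hba).2 (by linarith))
    rw [phi, e1, e2, zero_sub, mul_neg_one, abs_neg, abs_of_pos hba]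

lemma phi_hasDerivAt {a b : ℝ} (hab : a < b) (x : ℝ) :
    HasDerivAt (phi a b)
      (deriv Real.smoothTransition ((x - a)/(b - a)) +
        deriv Real.smoothTransition ((-x - a)/(b - a))) x := by
  have hba : b - a ≠ 0 := sub_ne_zero.2 hab.ne'
  have hψ : Differentiable ℝ Real.smoothTransition :=
    (Real.smoothTransition.contDiff (n := 1)).differentiable one_ne_zero
  have h1 : HasDerivAt (fun x : ℝ => (x - a)/(b - a)) (1/(b-a)) x := by
    simpa using ((hasDerivAt_id x).sub_const a).div_const (b - a)
  have h2 : HasDerivAt (fun x : ℝ => (-x - a)/(b - a)) (-1/(b-a)) x := by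
    simpa using (((hasDerivAt_id x).neg).sub_const a).div_const (b - a)
  have g1 : HasDerivAt (fun x : ℝ => Real.smoothTransition ((x - a)/(b-a)))
      (deriv Real.smoothTransition ((x - a)/(b-a)) * (1/(b-a))) x :=
    ((hψ _).hasDerivAt).comp x h1
  have g2 : HasDerivAt (fun x : ℝ => Real.smoothTransition ((-x - a)/(b-a)))
      (deriv Real.smoothTransition ((-x - a)/(b-a)) * (-1/(b-a))) x :=
    ((hψ _).hasDerivAt).comp x h2
  have hmain := (g1.sub g2).const_mul (b - a)
  have hfun : phi a b = fun x : ℝ => (b - a) * (Real.smoothTransition ((x - a)/(b-a)) -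
      Real.smoothTransition ((-x - a)/(b-a))) := rfl
  rw [hfun]
  convert hmain using 1
  · rfl
  · rfl
  · rfl
  have hinv : (b - a) * (b - a)⁻¹ = 1 := mul_inv_cancel₀ hba
  linear_combination (-(deriv Real.smoothTransition ((x - a)/(b - a)) +
    deriv Real.smoothTransition ((-x - a)/(b - a)))) * hinv

lemma phi_deriv_vanish {a b x : ℝ} (ha : 0 < a) (hab : a < b)
    (hx : ¬(a < |x| ∧ |x| < b)) :
    deriv Real.smoothTransition ((x - a)/(b - a)) +
      deriv Real.smoothTransition ((-x - a)/(b - a)) = 0 := by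
  have hba : 0 < b - a := sub_pos.2 hab
  have k1 : deriv Real.smoothTransition ((x - a)/(b-a)) = 0 := by
    apply psi_deriv_zero
    by_cases h1 : x ≤ a
    · exact Or.inl (div_nonpos_iff.mpr (Or.inr ⟨by linarith, hba.le⟩))
    · push_neg at h1 hx
      have hxpos : (0:ℝ) < x := ha.trans h1
      have hbx : b ≤ |x| := hx (by rw [abs_of_pos hxpos]; exact h1)
      rw [abs_of_pos hxpos] at hbx
      exact Or.inr ((one_le_div hba).2 (by linarith))
  have k2 : deriv Real.smoothTransition ((-x - a)/(b-a)) = 0 := by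
    apply psi_deriv_zero
    by_cases h2 : -x ≤ a
    · exact Or.inl (div_nonpos_iff.mpr (Or.inr ⟨by linarith, hba.le⟩))
    · push_neg at h2 hx
      have hxneg : x < 0 := by linarith
      have hbx : b ≤ |x| := hx (by rw [abs_of_neg hxneg]; exact h2)
      rw [abs_of_neg hxneg] at hbx
      exact Or.inr ((one_le_div hba).2 (by linarith))
  rw [k1, k2, add_zero]

lemma finrank_En (n : ℕ) : Module.finrank ℝ (En n) = n := by
  simp [finrank_euclideanSpace]

lemma trunc_bound (hn : 1 < n) (hsm : ContDiff ℝ (⊤ : ℕ∞) f) (hsf : HasCompactSupport f)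
    {κ : ℝ} (hκ0 : 0 ≤ κ) (hκ : ∀ y : ℝ, |deriv Real.smoothTransition y| ≤ κ)
    {a b : ℝ} (ha : 0 < a) (hab : a < b) :
    ENNReal.ofReal (b - a) * (mud f b) ^ ((1:ℝ) - 1/(n:ℝ))
      ≤ ((lintegralPowLePowLIntegralFDerivConst (volume : Measure (En n))
            ((n:ℝ)/((n:ℝ)-1)) : ℝ≥0∞)) ^ ((1:ℝ) - 1/(n:ℝ)) * ENNReal.ofReal (2*κ) *
        ∫⁻ x in {x : En n | a < |f x| ∧ |f x| < b}, (‖fderiv ℝ f x‖₊ : ℝ≥0∞) := by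
  have hn1 : (1:ℝ) < n := by exact_mod_cast hn
  have hnpos : (0:ℝ) < n := by linarith
  set q : ℝ := 1 - 1/(n:ℝ) with hq
  have hq0 : 0 < q := by
    rw [hq]
    have : 1/(n:ℝ) < 1 := by rw [div_lt_one hnpos]; exact hn1
    linarith
  set p : ℝ := (n:ℝ)/((n:ℝ)-1) with hp
  have hppos : 0 < p := by rw [hp]; exact div_pos hnpos (by linarith)
  have hpq : p * q = 1 := by
    rw [hp, hq]
    have h1 : (n:ℝ) - 1 ≠ 0 := by linarith
    field_simp
  set C₀ := lintegralPowLePowLIntegralFDerivConst (volume : Measure (En n)) p with hC₀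
  have hconj : Real.HolderConjugate (Module.finrank ℝ (En n)) p := by
    rw [finrank_En]
    exact Real.HolderConjugate.conjExponent hn1
  set u := fun x => phi a b (f x) with hu
  have hu1 : ContDiff ℝ 1 u := phi_contDiff.comp (hsm.of_le (by simp))
  have hu2 : HasCompactSupport u :=
    hsf.comp_left (g := phi a b) (phi_zero_of_abs_le ha.le hab (by simp [ha.le]))
  have hSob := lintegral_pow_le_pow_lintegral_fderiv (volume : Measure (En n)) hu1 hu2 hconj
  have hcf : Continuous f := hsm.continuous
  have hmB : MeasurableSet {x : En n | b < |f x|} := mud_measSet hcf b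
  have hlow : ENNReal.ofReal (b - a) ^ p * mud f b ≤ ∫⁻ x, (‖u x‖₊ : ℝ≥0∞) ^ p := by
    calc ENNReal.ofReal (b-a) ^ p * mud f b
        = ∫⁻ _ in {x : En n | b < |f x|}, ENNReal.ofReal (b-a) ^ p :=
          (setLIntegral_const _ _).symm
      _ = ∫⁻ x in {x : En n | b < |f x|}, (‖u x‖₊ : ℝ≥0∞) ^ p := by
          apply setLIntegral_congr_fun hmB
          intro x hx
          beta_reduce
          have habs : (‖u x‖₊ : ℝ≥0∞) = ENNReal.ofReal (b - a) := by
            rw [← enorm_eq_nnnorm, ← ofReal_norm, Real.norm_eq_abs]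
            exact congrArg _ (phi_abs_of_ge ha.le hab (le_of_lt hx))
          rw [habs]
      _ ≤ ∫⁻ x, (‖u x‖₊ : ℝ≥0∞) ^ p := setLIntegral_le_lintegral _ _
  have hA : MeasurableSet {x : En n | a < |f x| ∧ |f x| < b} :=
    (mud_measSet hcf a).inter (measurableSet_lt hcf.abs.measurable measurable_const)
  have hdiff : Differentiable ℝ f := hsm.differentiable (by simp)
  have hDf : ∀ x, fderiv ℝ u x = (deriv Real.smoothTransition ((f x - a)/(b - a)) +
      deriv Real.smoothTransition ((-f x - a)/(b - a))) • fderiv ℝ f x := by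
    intro x
    exact ((phi_hasDerivAt hab (f x)).comp_hasFDerivAt x (hdiff x).hasFDerivAt).fderiv
  have hfdm : Measurable fun x : En n => (‖fderiv ℝ f x‖₊ : ℝ≥0∞) :=
    (hsm.continuous_fderiv (by simp)).nnnorm.measurable.coe_nnreal_ennreal
  have hup : ∫⁻ x, (‖fderiv ℝ u x‖₊ : ℝ≥0∞)
      ≤ ENNReal.ofReal (2*κ) *
        ∫⁻ x in {x : En n | a < |f x| ∧ |f x| < b}, (‖fderiv ℝ f x‖₊ : ℝ≥0∞) := by
    have hpt : ∀ x, (‖fderiv ℝ u x‖₊ : ℝ≥0∞) ≤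
        ENNReal.ofReal (2*κ) * Set.indicator {x : En n | a < |f x| ∧ |f x| < b}
          (fun x => (‖fderiv ℝ f x‖₊ : ℝ≥0∞)) x := by
      intro x
      by_cases hx : a < |f x| ∧ |f x| < b
      · rw [Set.indicator_of_mem (show x ∈ {x : En n | a < |f x| ∧ |f x| < b} from hx), hDf x,
          ← enorm_eq_nnnorm, ← ofReal_norm, ← enorm_eq_nnnorm, ← ofReal_norm,
          ← ENNReal.ofReal_mul (by positivity)]
        apply ENNReal.ofReal_le_ofReal
        rw [norm_smul]
        apply mul_le_mul_of_nonneg_right _ (norm_nonneg _)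
        rw [Real.norm_eq_abs]
        calc |deriv Real.smoothTransition ((f x - a)/(b - a)) +
              deriv Real.smoothTransition ((-f x - a)/(b - a))|
            ≤ |deriv Real.smoothTransition ((f x - a)/(b - a))| +
              |deriv Real.smoothTransition ((-f x - a)/(b - a))| := abs_add_le _ _
          _ ≤ κ + κ := add_le_add (hκ _) (hκ _)
          _ = 2*κ := by ring
      · rw [Set.indicator_of_notMem (show x ∉ {x : En n | a < |f x| ∧ |f x| < b} from hx), mul_zero, hDf x,
          phi_deriv_vanish ha hab hx, zero_smul]
        simp
    calc ∫⁻ x, (‖fderiv ℝ u x‖₊ : ℝ≥0∞)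
        ≤ ∫⁻ x, ENNReal.ofReal (2*κ) * Set.indicator {x : En n | a < |f x| ∧ |f x| < b}
            (fun x => (‖fderiv ℝ f x‖₊ : ℝ≥0∞)) x := lintegral_mono hpt
      _ = ENNReal.ofReal (2*κ) * ∫⁻ x, Set.indicator {x : En n | a < |f x| ∧ |f x| < b}
            (fun x => (‖fderiv ℝ f x‖₊ : ℝ≥0∞)) x :=
          lintegral_const_mul _ (hfdm.indicator hA)
      _ = ENNReal.ofReal (2*κ) *
            ∫⁻ x in {x : En n | a < |f x| ∧ |f x| < b}, (‖fderiv ℝ f x‖₊ : ℝ≥0∞) := by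
          rw [lintegral_indicator hA]
  set R := ∫⁻ x in {x : En n | a < |f x| ∧ |f x| < b}, (‖fderiv ℝ f x‖₊ : ℝ≥0∞) with hR
  have hcomb : ENNReal.ofReal (b-a) ^ p * mud f b
      ≤ (C₀ : ℝ≥0∞) * (ENNReal.ofReal (2*κ) * R) ^ p := by
    refine hlow.trans (hSob.trans ?_)
    exact mul_le_mul_right (ENNReal.rpow_le_rpow hup hppos.le) _
  have hfin := ENNReal.rpow_le_rpow hcomb hq0.le
  rw [ENNReal.mul_rpow_of_nonneg _ _ hq0.le, ← ENNReal.rpow_mul, hpq, ENNReal.rpow_one] at hfin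
  rw [ENNReal.mul_rpow_of_nonneg _ _ hq0.le, ← ENNReal.rpow_mul, hpq, ENNReal.rpow_one] at hfin
  calc ENNReal.ofReal (b - a) * (mud f b) ^ q
      ≤ (C₀ : ℝ≥0∞) ^ q * (ENNReal.ofReal (2*κ) * R) := hfin
    _ = (C₀ : ℝ≥0∞) ^ q * ENNReal.ofReal (2*κ) * R := by rw [mul_assoc]

lemma block_union {h : ℝ} (hh : 0 < h) :
    (⋃ k : ℕ, Ico (((k:ℝ)+2)*h) (((k:ℝ)+3)*h)) = Ici (2*h) := by
  ext t
  simp only [Set.mem_iUnion, Set.mem_Ico, Set.mem_Ici]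
  constructor
  · rintro ⟨k, h1, h2⟩
    have hk : (2:ℝ) ≤ (k:ℝ) + 2 := by
      have : (0:ℝ) ≤ (k:ℝ) := Nat.cast_nonneg k
      linarith
    nlinarith
  · intro ht
    have hd2 : (2:ℝ) ≤ t/h := (le_div_iff₀ hh).2 (by linarith)
    set m : ℤ := ⌊t/h⌋ with hm
    have hm2 : (2:ℤ) ≤ m := Int.le_floor.2 (by exact_mod_cast hd2)
    have hfl : (m:ℝ) ≤ t/h := Int.floor_le _
    have hfl2 : t/h < m + 1 := Int.lt_floor_add_one _
    have hc : (((m - 2).toNat : ℕ) : ℝ) = (m : ℝ) - 2 := by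
      have h0 : ((m - 2).toNat : ℤ) = m - 2 := Int.toNat_of_nonneg (by omega)
      exact_mod_cast congrArg (Int.cast : ℤ → ℝ) h0
    refine ⟨(m - 2).toNat, ?_, ?_⟩
    · rw [hc, show ((m:ℝ) - 2 + 2) * h = (m:ℝ) * h by ring]
      exact (le_div_iff₀ hh).1 hfl
    · rw [hc, show ((m:ℝ) - 2 + 3) * h = ((m:ℝ) + 1) * h by ring]
      exact (div_lt_iff₀ hh).1 hfl2

lemma Ico_blocks_disjoint {h : ℝ} (hh : 0 < h) :
    Pairwise (Function.onFun Disjoint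
      fun k : ℕ => Ico (((k:ℝ)+2)*h) (((k:ℝ)+3)*h)) := by
  intro i j hij
  wlog hlt : i < j generalizing i j
  · exact (this hij.symm (by omega)).symm
  apply Set.disjoint_left.2
  rintro t ⟨h1, h2⟩ ⟨h3, h4⟩
  have hc : ((i:ℝ)+3) ≤ ((j:ℝ)+2) := by
    have : (i:ℕ)+3 ≤ j+2 := by omega
    exact_mod_cast this
  have := mul_le_mul_of_nonneg_right hc hh.le
  linarith

lemma A_blocks_disjoint {h : ℝ} (hh : 0 < h) :
    Pairwise (Function.onFun Disjoint fun k : ℕ =>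
      {x : En n | ((k:ℝ)+1)*h < |f x| ∧ |f x| < ((k:ℝ)+2)*h}) := by
  intro i j hij
  wlog hlt : i < j generalizing i j
  · exact (this hij.symm (by omega)).symm
  apply Set.disjoint_left.2
  rintro x ⟨h1, h2⟩ ⟨h3, h4⟩
  have hc : ((i:ℝ)+2) ≤ ((j:ℝ)+1) := by
    have : (i:ℕ)+2 ≤ j+1 := by omega
    exact_mod_cast this
  have := mul_le_mul_of_nonneg_right hc hh.le
  linarith

lemma tail_bound (hn : 1 < n) (hsm : ContDiff ℝ (⊤ : ℕ∞) f) (hsf : HasCompactSupport f)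
    {κ : ℝ} (hκ0 : 0 ≤ κ) (hκ : ∀ y : ℝ, |deriv Real.smoothTransition y| ≤ κ)
    {h : ℝ} (hh : 0 < h) :
    ∫⁻ t in Ici (2*h), (mud f t) ^ ((1:ℝ) - 1/(n:ℝ))
      ≤ ((lintegralPowLePowLIntegralFDerivConst (volume : Measure (En n))
            ((n:ℝ)/((n:ℝ)-1)) : ℝ≥0∞)) ^ ((1:ℝ) - 1/(n:ℝ)) * ENNReal.ofReal (2*κ) *
        ∫⁻ x, (‖fderiv ℝ f x‖₊ : ℝ≥0∞) := by
  have hcf : Continuous f := hsm.continuous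
  set C₁ := ((lintegralPowLePowLIntegralFDerivConst (volume : Measure (En n))
      ((n:ℝ)/((n:ℝ)-1)) : ℝ≥0∞)) ^ ((1:ℝ) - 1/(n:ℝ)) * ENNReal.ofReal (2*κ) with hC₁
  set A : ℕ → Set (En n) := fun k =>
    {x : En n | ((k:ℝ)+1)*h < |f x| ∧ |f x| < ((k:ℝ)+2)*h} with hA
  have hAm : ∀ k, MeasurableSet (A k) := fun k =>
    (mud_measSet hcf _).inter (measurableSet_lt hcf.abs.measurable measurable_const)
  have hFm : Measurable fun t : ℝ => (mud f t) ^ ((1:ℝ) - 1/(n:ℝ)) :=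
    (mud_anti f).measurable.pow measurable_const
  have hterm : ∀ k : ℕ, ∫⁻ t in Ico (((k:ℝ)+2)*h) (((k:ℝ)+3)*h),
      (mud f t) ^ ((1:ℝ) - 1/(n:ℝ))
      ≤ C₁ * ∫⁻ x in A k, (‖fderiv ℝ f x‖₊ : ℝ≥0∞) := by
    intro k
    have hk0 : (0:ℝ) ≤ (k:ℝ) := Nat.cast_nonneg k
    have ha : (0:ℝ) < ((k:ℝ)+1)*h := by positivity
    have hab : ((k:ℝ)+1)*h < ((k:ℝ)+2)*h := by nlinarith
    have hstep1 : ∫⁻ t in Ico (((k:ℝ)+2)*h) (((k:ℝ)+3)*h),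
        (mud f t) ^ ((1:ℝ) - 1/(n:ℝ))
        ≤ ENNReal.ofReal h * (mud f (((k:ℝ)+2)*h)) ^ ((1:ℝ) - 1/(n:ℝ)) := by
      calc ∫⁻ t in Ico (((k:ℝ)+2)*h) (((k:ℝ)+3)*h), (mud f t) ^ ((1:ℝ) - 1/(n:ℝ))
          ≤ ∫⁻ _ in Ico (((k:ℝ)+2)*h) (((k:ℝ)+3)*h),
              (mud f (((k:ℝ)+2)*h)) ^ ((1:ℝ) - 1/(n:ℝ)) :=
            setLIntegral_mono measurable_const
              (fun t ht => ENNReal.rpow_le_rpow (mud_anti f ht.1) (by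
                have hn1 : (1:ℝ) < n := by exact_mod_cast hn
                have hnpos : (0:ℝ) < n := by linarith
                have : 1/(n:ℝ) < 1 := by rw [div_lt_one hnpos]; exact hn1
                linarith))
        _ = (mud f (((k:ℝ)+2)*h)) ^ ((1:ℝ) - 1/(n:ℝ)) *
              volume (Ico (((k:ℝ)+2)*h) (((k:ℝ)+3)*h)) := setLIntegral_const _ _
        _ = ENNReal.ofReal h * (mud f (((k:ℝ)+2)*h)) ^ ((1:ℝ) - 1/(n:ℝ)) := by
            rw [Real.volume_Ico, show ((k:ℝ)+3)*h - ((k:ℝ)+2)*h = h by ring, mul_comm]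
    have hstep2 := trunc_bound hn hsm hsf hκ0 hκ ha hab
    rw [show ((k:ℝ)+2)*h - ((k:ℝ)+1)*h = h by ring] at hstep2
    exact hstep1.trans hstep2
  calc ∫⁻ t in Ici (2*h), (mud f t) ^ ((1:ℝ) - 1/(n:ℝ))
      = ∑' k : ℕ, ∫⁻ t in Ico (((k:ℝ)+2)*h) (((k:ℝ)+3)*h),
          (mud f t) ^ ((1:ℝ) - 1/(n:ℝ)) := by
        rw [← block_union hh, lintegral_iUnion (fun k => measurableSet_Ico)
          (Ico_blocks_disjoint hh)]
    _ ≤ ∑' k : ℕ, C₁ * ∫⁻ x in A k, (‖fderiv ℝ f x‖₊ : ℝ≥0∞) :=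
        ENNReal.tsum_le_tsum hterm
    _ = C₁ * ∑' k : ℕ, ∫⁻ x in A k, (‖fderiv ℝ f x‖₊ : ℝ≥0∞) := ENNReal.tsum_mul_left
    _ = C₁ * ∫⁻ x in ⋃ k, A k, (‖fderiv ℝ f x‖₊ : ℝ≥0∞) := by
        rw [lintegral_iUnion hAm (A_blocks_disjoint hh)]
    _ ≤ C₁ * ∫⁻ x, (‖fderiv ℝ f x‖₊ : ℝ≥0∞) :=
        mul_le_mul_right (setLIntegral_le_lintegral _ _) _

lemma T_bound (hn : 1 < n) (hsm : ContDiff ℝ (⊤ : ℕ∞) f) (hsf : HasCompactSupport f)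
    {κ : ℝ} (hκ0 : 0 ≤ κ) (hκ : ∀ y : ℝ, |deriv Real.smoothTransition y| ≤ κ) :
    ∫⁻ t in Ioi (0:ℝ), (mud f t) ^ ((1:ℝ) - 1/(n:ℝ))
      ≤ ((lintegralPowLePowLIntegralFDerivConst (volume : Measure (En n))
            ((n:ℝ)/((n:ℝ)-1)) : ℝ≥0∞)) ^ ((1:ℝ) - 1/(n:ℝ)) * ENNReal.ofReal (2*κ) *
        ∫⁻ x, (‖fderiv ℝ f x‖₊ : ℝ≥0∞) := by
  set F : ℝ → ℝ≥0∞ := fun t => (mud f t) ^ ((1:ℝ) - 1/(n:ℝ)) with hF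
  have hFm : Measurable F := (mud_anti f).measurable.pow measurable_const
  set G : ℕ → ℝ → ℝ≥0∞ := fun m t => (Ici (2*(1/((m:ℝ)+1)))).indicator F t with hG
  have hGm : ∀ m, Measurable (G m) := fun m => hFm.indicator measurableSet_Ici
  have hmono : Monotone G := by
    intro m m' hmm
    apply Set.indicator_le_indicator_of_subset
    · apply Ici_subset_Ici.2
      have h1 : (1:ℝ)/((m':ℝ)+1) ≤ 1/((m:ℝ)+1) := by
        apply one_div_le_one_div_of_le (by positivity)
        exact_mod_cast by omega
      linarith
    · exact fun t => zero_le
  have hsup : ∀ t, (⨆ m, G m t) = (Ioi (0:ℝ)).indicator F t := by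
    intro t
    by_cases ht : 0 < t
    · rw [Set.indicator_of_mem (show t ∈ Ioi (0:ℝ) from ht)]
      apply le_antisymm
      · exact iSup_le fun m => Set.indicator_le_self' (fun _ _ => zero_le) t
      · obtain ⟨m, hm⟩ := exists_nat_one_div_lt (half_pos ht)
        have hmem : t ∈ Ici (2*(1/((m:ℝ)+1))) := by
          simp only [Set.mem_Ici]
          linarith
        refine le_trans ?_ (le_iSup _ m)
        rw [hG]
        simp only
        rw [Set.indicator_of_mem hmem]
    · rw [Set.indicator_of_notMem (show t ∉ Ioi (0:ℝ) from ht)]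
      simp only [ENNReal.iSup_eq_zero]
      intro m
      apply Set.indicator_of_notMem
      simp only [Set.mem_Ici, not_le]
      have : (0:ℝ) < 2*(1/((m:ℝ)+1)) := by positivity
      have ht' : t ≤ 0 := not_lt.1 ht
      linarith
  calc ∫⁻ t in Ioi (0:ℝ), F t = ∫⁻ t, (Ioi (0:ℝ)).indicator F t :=
        (lintegral_indicator measurableSet_Ioi _).symm
    _ = ∫⁻ t, ⨆ m, G m t := lintegral_congr fun t => (hsup t).symm
    _ = ⨆ m, ∫⁻ t, G m t := lintegral_iSup hGm hmono
    _ ≤ _ := by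
        apply iSup_le
        intro m
        rw [hG]
        simp only
        rw [lintegral_indicator measurableSet_Ici]
        exact tail_bound hn hsm hsf hκ0 hκ (by positivity)

lemma rhs_eq (hn : 1 < n) (hcf : Continuous f) (hsf : HasCompactSupport f) :
    (∫ s in Set.Ioi (0:ℝ), dstar f s * s ^ ((1:ℝ) - 1 / n) / s)
      = (∫⁻ s in Ioi (0:ℝ),
          ENNReal.ofReal (s ^ (-(1:ℝ)/n)) * ENNReal.ofReal (dstar f s)).toReal := by
  have hmA : Measurable fun s : ℝ => s ^ (-(1:ℝ)/n) * dstar f s :=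
    (measurable_id'.pow measurable_const).mul (dstar_measurable hcf hsf)
  have hA0 : 0 ≤ᵐ[volume.restrict (Ioi (0:ℝ))] fun s : ℝ => s ^ (-(1:ℝ)/n) * dstar f s := by
    filter_upwards [self_mem_ae_restrict measurableSet_Ioi] with s hs
    exact mul_nonneg (Real.rpow_nonneg (le_of_lt hs) _) (dstar_nonneg hcf hsf hs)
  have hAof : ∫⁻ s in Ioi (0:ℝ), ENNReal.ofReal (s ^ (-(1:ℝ)/n) * dstar f s)
      = ∫⁻ s in Ioi (0:ℝ), ENNReal.ofReal (s ^ (-(1:ℝ)/n)) * ENNReal.ofReal (dstar f s) := by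
    apply lintegral_congr_ae
    filter_upwards [self_mem_ae_restrict measurableSet_Ioi] with s hs
    rw [ENNReal.ofReal_mul (Real.rpow_nonneg (le_of_lt hs) _)]
  have hAeq : ∫ s in Ioi (0:ℝ), s ^ (-(1:ℝ)/n) * dstar f s
      = (∫⁻ s in Ioi (0:ℝ),
          ENNReal.ofReal (s ^ (-(1:ℝ)/n)) * ENNReal.ofReal (dstar f s)).toReal := by
    rw [integral_eq_lintegral_of_nonneg_ae hA0 hmA.aestronglyMeasurable, hAof]
  rw [← hAeq]
  apply MeasureTheory.setIntegral_congr_fun measurableSet_Ioi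
  intro s hs
  have hs' : (0:ℝ) < s := hs
  have h1 : s ^ ((1:ℝ) - 1/n) = s * s ^ (-(1:ℝ)/n) := by
    rw [show (1:ℝ) - 1/n = 1 + (-(1:ℝ)/n) by ring, Real.rpow_add hs', Real.rpow_one]
  show dstar f s * s ^ ((1:ℝ) - 1/n) / s = s ^ (-(1:ℝ)/n) * dstar f s
  rw [h1, mul_comm s (s ^ (-(1:ℝ)/n)), ← mul_assoc, mul_div_assoc,
    div_self hs'.ne', mul_one, mul_comm]

end SGN

open SGN

/-- For `f ∈ C₀^∞(ℝ^n)`,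
`∫₀^∞ s^{-1/n}[f**(s) − f*(s)] ds = (1 − 1/n)∫₀^∞ f**(s) s^{1−1/n} ds/s
 = (1−1/n)‖f‖_{L^{n/(n-1),1}}`; consequently the sharp Gagliardo–Nirenberg
embedding `W₀^{1,1}(ℝ^n) ⊂ L^{n/(n-1),1}(ℝ^n)` holds. -/
theorem sharp_gagliardo_nirenberg {n : ℕ} (hn : 1 < n) :
    (∀ f : En n → ℝ, SmoothC f →
      (∫ s in Set.Ioi (0:ℝ), s ^ (-(1:ℝ) / n) * (dstar f s - rearr f s)) =
        (1 - 1 / (n:ℝ)) * ∫ s in Set.Ioi (0:ℝ), dstar f s * s ^ ((1:ℝ) - 1 / n) / s) ∧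
    (∃ C : ℝ, 0 < C ∧ ∀ f : En n → ℝ, SmoothC f →
      (∫ s in Set.Ioi (0:ℝ), dstar f s * s ^ ((1:ℝ) - 1 / n) / s) ≤
        C * ∫ x, gradNorm f x) := by
  have hn1 : (1:ℝ) < n := by exact_mod_cast hn
  have hnpos : (0:ℝ) < n := by linarith
  have hq0 : 0 < 1 - 1/(n:ℝ) := by
    have : 1/(n:ℝ) < 1 := by rw [div_lt_one hnpos]; exact hn1
    linarith
  constructor
  · intro f hf
    exact part1 hn hf.1.continuous hf.2
  · obtain ⟨κ, hκ0, hκ⟩ := psi_bound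
    set Cq : ℝ≥0∞ := (n : ℝ≥0∞) * ENNReal.ofReal (1 - 1/(n:ℝ))⁻¹ *
      (((lintegralPowLePowLIntegralFDerivConst (volume : Measure (En n))
          ((n:ℝ)/((n:ℝ)-1)) : ℝ≥0∞)) ^ ((1:ℝ) - 1/(n:ℝ)) * ENNReal.ofReal (2*κ)) with hCq
    have hCqt : Cq ≠ ⊤ := by
      rw [hCq]
      apply ENNReal.mul_ne_top (ENNReal.mul_ne_top (ENNReal.natCast_ne_top n)
        ENNReal.ofReal_ne_top)
      exact ENNReal.mul_ne_top
        (ENNReal.rpow_ne_top_of_nonneg hq0.le ENNReal.coe_ne_top) ENNReal.ofReal_ne_top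
    refine ⟨max Cq.toReal 1, lt_of_lt_of_le one_pos (le_max_right _ _), ?_⟩
    intro f hf
    have hcf : Continuous f := hf.1.continuous
    have hsf : HasCompactSupport f := hf.2
    have hgradcont : Continuous fun x : En n => ‖fderiv ℝ f x‖ :=
      (hf.1.continuous_fderiv (by simp)).norm
    have hgradint : Integrable (fun x : En n => ‖fderiv ℝ f x‖) :=
      hgradcont.integrable_of_hasCompactSupport (hsf.fderiv ℝ).norm
    set J := ∫⁻ x, (‖fderiv ℝ f x‖₊ : ℝ≥0∞) with hJ
    have hJof : J = ∫⁻ x, ENNReal.ofReal ‖fderiv ℝ f x‖ :=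
      lintegral_congr fun x => (ofReal_norm _).symm
    have hJne : J ≠ ⊤ := by
      have h2 := (hasFiniteIntegral_iff_ofReal
        (ae_of_all _ fun x => norm_nonneg _)).1 hgradint.2
      rw [hJof]
      exact h2.ne
    have hgradeq : ∫ x, gradNorm f x = J.toReal := by
      show ∫ x, ‖fderiv ℝ f x‖ = J.toReal
      rw [integral_eq_lintegral_of_nonneg_ae (ae_of_all _ fun x => norm_nonneg _)
        hgradcont.aestronglyMeasurable, ← hJof]
    set I2 := ∫⁻ s in Ioi (0:ℝ),
      ENNReal.ofReal (s ^ (-(1:ℝ)/n)) * ENNReal.ofReal (dstar f s) with hI2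
    have hchain : I2 ≤ Cq * J := by
      rw [hI2, I2_eq_I1 hn hcf hsf, I1_layercake hn hcf hsf, ← mul_assoc, hCq]
      rw [mul_assoc ((n:ℝ≥0∞) * ENNReal.ofReal (1 - 1/(n:ℝ))⁻¹)]
      exact mul_le_mul_right (T_bound hn hf.1 hsf hκ0 hκ) _
    have hLHSr := rhs_eq hn hcf hsf
    rw [hLHSr, hgradeq]
    have h1 : I2.toReal ≤ (Cq * J).toReal :=
      ENNReal.toReal_mono (ENNReal.mul_ne_top hCqt hJne) hchain
    rw [ENNReal.toReal_mul] at h1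
    have h2 : Cq.toReal * J.toReal ≤ max Cq.toReal 1 * J.toReal :=
      mul_le_mul_of_nonneg_right (le_max_left _ _) ENNReal.toReal_nonneg
    exact h1.trans h2
end
end
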